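/- arXiv:2503.00886 — 2 statements merged into one kernel-verified Lean document; each statement's English description precedes it below -/
import Mathlib

section
/- Let [a,b] be a segment with b > a and m a multisegment in good range for [a,b], and let r ∈ ℤ_{>0} be sufficiently large. If |I_{[a]}(m)| = |m|, then D^{Lang,L}_{[a]}(𝔻_r(m)) = 𝔻_r(I_{[a]}(m)) and D^{Lang,L}_{[a]}(𝔻_r^{[a,b]}(m)) = 𝔻_r^{[a,b]}(I_{[a]}(m)). -/
/-!
On single segments `Θ ∘ 𝔻_r` is the involution `[x, y] ↦ [1 - x, r - y - 1]`. It exchanges the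
segments starting at `a` and `a + 1` with those starting at `-a + 1` and `-a`, reverses lengths,
and, once `r` is large compared with the ends of the segments, reverses precedence between
them. Hence it carries the `tus(·, a)` process step by step onto the `tds(·, -a)` process and
the longest segment of `n_ℓ[a + 1]` onto the shortest segment of `m_k[-a]`, so it intertwines
`ℐ_{[a]}` with `𝒟_{[-a]}`. The hypothesis `|ℐ_{[a]}(m)| = |m|` rules out the case where `ℐ_{[a]}`
adjoins `[a, a]`, which corresponds to `𝒟_{[-a]} = ∞`. The statement for `𝔻_r^{[a,b]}` follows by
applying the one for `𝔻_r` to `m + [b + 1, b]`, a formal void segment out of reach of both processes.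
-/

namespace Multiseg

/-- A segment `[a,b]` on a fixed cuspidal line, encoded by its endpoints. -/
abbrev Seg := ℤ × ℤ

/-- A multiset of pairs is a multisegment when each pair is a genuine segment. -/
def IsMS (m : Multiset Seg) : Prop := ∀ Δ ∈ m, Δ.1 ≤ Δ.2

/-- `Δ ≺ Δ'` : the segment `Δ` precedes `Δ'`. -/
def Prec (Δ Δ' : Seg) : Prop := Δ.1 < Δ'.1 ∧ Δ.2 < Δ'.2 ∧ Δ'.1 ≤ Δ.2 + 1

instance : DecidableRel Prec := fun _ _ => by unfold Prec; infer_instance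

/-- `Δ ⊆ Δ'` as segments. -/
def SSub (Δ Δ' : Seg) : Prop := Δ'.1 ≤ Δ.1 ∧ Δ.2 ≤ Δ'.2

/-- `m[i]`, the segments of `m` starting at `i`. -/
def startAt (m : Multiset Seg) (i : ℤ) : Multiset Seg := m.filter fun Δ => Δ.1 = i

/-- `m⟨i⟩`, the segments of `m` ending at `i`. -/
def endAt (m : Multiset Seg) (i : ℤ) : Multiset Seg := m.filter fun Δ => Δ.2 = i

/-- `m_{[a,b]} = {[a',b'] ∈ m : a ≤ a' ≤ b+1 ≤ b'+1}`. -/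
def mRange (m : Multiset Seg) (a b : ℤ) : Multiset Seg :=
  m.filter fun Δ => a ≤ Δ.1 ∧ Δ.1 ≤ b + 1 ∧ b ≤ Δ.2

/-- Add the segment `[x,y]` to `m`, discarding it if it is void. -/
def pushSeg (m : Multiset Seg) (x y : ℤ) : Multiset Seg :=
  if x ≤ y then m + {(x, y)} else m

def msetMax (s : Multiset ℤ) : Option ℤ :=
  if h : s = 0 then none else some (s.toFinset.max' (Multiset.toFinset_nonempty.mpr h))

def msetMin (s : Multiset ℤ) : Option ℤ :=
  if h : s = 0 then none else some (s.toFinset.min' (Multiset.toFinset_nonempty.mpr h))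

/-- The longest segment of `m[i]`, if any. -/
def longStart (m : Multiset Seg) (i : ℤ) : Option Seg :=
  (msetMax ((startAt m i).map Prod.snd)).map fun y => (i, y)

/-- The shortest segment of `m[i]`, if any. -/
def shortStart (m : Multiset Seg) (i : ℤ) : Option Seg :=
  (msetMin ((startAt m i).map Prod.snd)).map fun y => (i, y)

/-- The longest segment of `m⟨i⟩`, if any. -/
def longEnd (m : Multiset Seg) (i : ℤ) : Option Seg :=
  (msetMin ((endAt m i).map Prod.fst)).map fun x => (x, i)

/-- The shortest segment of `m⟨i⟩`, if any. -/
def shortEnd (m : Multiset Seg) (i : ℤ) : Option Seg :=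
  (msetMax ((endAt m i).map Prod.fst)).map fun x => (x, i)

/-- One removal step of the `tds(·,c)` process: remove the longest segment `Δ''`
of `m[c+1]` and the longest segment `Δ'` of `m[c]` with `Δ' ≺ Δ''`. -/
def tdsStep (m : Multiset Seg) (c : ℤ) : Option (Multiset Seg) :=
  match longStart m (c + 1) with
  | none => none
  | some Δ'' =>
    match msetMax (((startAt m c).filter fun Δ => Prec Δ Δ'').map Prod.snd) with
    | none => none
    | some y => some ((m.erase (c, y)).erase Δ'')

def tdsIterF (c : ℤ) : ℕ → Multiset Seg → Multiset Seg
  | 0, m => m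
  | n + 1, m =>
    match tdsStep m c with
    | none => m
    | some m' => tdsIterF c n m'

/-- Iterate the `tds(·,c)` process until it terminates. -/
def tdsIter (c : ℤ) (m : Multiset Seg) : Multiset Seg := tdsIterF c m.card m

/-- The `ρ`-derivative algorithm `𝒟_{[a]}`; the value `none` codes `∞`. -/
def Drho (a : ℤ) (m : Multiset Seg) : Option (Multiset Seg) :=
  (shortStart (tdsIter a m) a).map fun Δ => pushSeg (m.erase Δ) (a + 1) Δ.2

/-- `ε_{[a]}(m)`, the number of segments starting at `a` left after the
`tds(·,a)` process terminates. -/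
def epsA (a : ℤ) (m : Multiset Seg) : ℕ := (startAt (tdsIter a m) a).card

/-- The next element of an upward sequence after `p`. -/
def usNext (n : Multiset Seg) (p : Seg) : Option Seg :=
  match msetMin ((n.filter fun Δ => Prec p Δ).map Prod.fst) with
  | none => none
  | some aj =>
    (msetMax ((((n.filter fun Δ => Prec p Δ).filter fun Δ => Δ.1 = aj)).map Prod.snd)).map
      fun y => (aj, y)

def usAux (n : Multiset Seg) : ℕ → Seg → List Seg
  | 0, _ => []
  | fuel + 1, p =>
    match usNext n p with
    | none => []
    | some Δ => Δ :: usAux n fuel Δ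

/-- The upward sequence `Us(n)` of maximally linked segments of `n`. -/
def usList (n : Multiset Seg) : List Seg :=
  match msetMin (n.map Prod.fst) with
  | none => []
  | some a1 =>
    match longStart n a1 with
    | none => []
    | some Δ1 => Δ1 :: usAux n n.card Δ1

/-- The decomposition of a multisegment into successive upward sequences. -/
def usDecomp : ℕ → Multiset Seg → List (List Seg)
  | 0, _ => []
  | fuel + 1, n =>
    if n = 0 then [] else usList n :: usDecomp fuel (n - (usList n : Multiset Seg))

/-- `[x,y] ⊆ [u,v]` (with the void interval contained in anything). -/
def intSubB (x y u v : ℤ) : Bool := decide (y < x) || (decide (u ≤ x) && decide (y ≤ v))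

/-- Find, in a row of an upward-sequence decomposition, the first segment `Δ`
whose removable free section contains `[s(Δ), top]`. -/
def findRowD : List Seg → ℤ → Option Seg
  | [], _ => none
  | [Δ], top => if intSubB Δ.1 top Δ.1 Δ.2 then some Δ else none
  | Δ :: Δ' :: rest, top =>
    if intSubB Δ.1 top Δ.1 (Δ'.1 - 2) then some Δ else findRowD (Δ' :: rest) top

/-- The selection step of the Langlands derivative algorithm, scanning the rows
downwards from the last one; it records each selected segment together with the
start of its truncation. -/
def selAuxD (rows : List (List Seg)) : ℕ → ℤ → List (Seg × ℤ)
  | 0, _ => []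
  | n + 1, top =>
    match findRowD (rows.getD n []) top with
    | some Δ => (Δ, top + 1) :: selAuxD rows n (Δ.1 - 1)
    | none => selAuxD rows n top

/-- The Langlands derivative algorithm `𝒟^Lang_{[a,b]}`; `none` codes `∞`. -/
def DLang (a b : ℤ) (m : Multiset Seg) : Option (Multiset Seg) :=
  let m1 := mRange m a b
  let rows := usDecomp m1.card m1
  let sel := selAuxD rows rows.length b
  match sel.getLast? with
  | none => none
  | some (Δl, _) =>
    if Δl.1 = a then
      some (sel.foldl (fun acc p => pushSeg (acc.erase p.1) p.2 p.1.2) m)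
    else none

/-- One removal step of the `tus(·,c)` process. -/
def tusStep (n : Multiset Seg) (c : ℤ) : Option (Multiset Seg) :=
  match shortStart n c with
  | none => none
  | some Δ' =>
    match msetMin (((startAt n (c + 1)).filter fun Δ => Prec Δ' Δ).map Prod.snd) with
    | none => none
    | some y => some ((n.erase Δ').erase (c + 1, y))

def tusIterF (c : ℤ) : ℕ → Multiset Seg → Multiset Seg
  | 0, n => n
  | k + 1, n =>
    match tusStep n c with
    | none => n
    | some n' => tusIterF c k n'

/-- Iterate the `tus(·,c)` process until it terminates. -/
def tusIter (c : ℤ) (n : Multiset Seg) : Multiset Seg := tusIterF c n.card n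

/-- The `ρ`-integral algorithm `ℐ_{[a]}` (always defined). -/
def Irho (a : ℤ) (n : Multiset Seg) : Multiset Seg :=
  match longStart (tusIter a n) (a + 1) with
  | none => n + {(a, a)}
  | some Δ => pushSeg (n.erase Δ) a Δ.2

/-- The next element of a downward sequence after `p`. -/
def dsNext (n : Multiset Seg) (p : Seg) : Option Seg :=
  match msetMax ((n.filter fun Δ => Prec Δ p).map Prod.fst) with
  | none => none
  | some aq => shortStart n aq

def dsAux (n : Multiset Seg) : ℕ → Seg → List Seg
  | 0, _ => []
  | k + 1, p =>
    match dsNext n p with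
    | none => []
    | some Δ => Δ :: dsAux n k Δ

/-- The downward sequence `Ds(n)` of minimal linked segments with the largest
starting. -/
def dsList (n : Multiset Seg) : List Seg :=
  match msetMax (n.map Prod.fst) with
  | none => []
  | some a1 =>
    match shortStart n a1 with
    | none => []
    | some Δ1 => Δ1 :: dsAux n n.card Δ1

/-- The decomposition of a multisegment into successive downward sequences. -/
def dsDecomp : ℕ → Multiset Seg → List (List Seg)
  | 0, _ => []
  | k + 1, n =>
    if n = 0 then [] else dsList n :: dsDecomp k (n - (dsList n : Multiset Seg))

/-- Find, in a row of a downward-sequence decomposition, the segment whose set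
of addable free points contains `pt`. -/
def findRowI (a : ℤ) : List Seg → ℤ → Option Seg
  | [], _ => none
  | [Δ], pt => if decide (a ≤ pt) && decide (pt ≤ Δ.1 - 1) then some Δ else none
  | Δ :: Δ' :: rest, pt =>
    if decide (Δ'.1 + 1 ≤ pt) && decide (pt ≤ Δ.1 - 1) then some Δ
    else findRowI a (Δ' :: rest) pt

/-- The selection step of the Langlands integral algorithm; it records each
selected segment together with the start of its extension. -/
def selAuxI (a : ℤ) (rows : List (List Seg)) : ℕ → ℤ → List (Seg × ℤ)
  | 0, _ => []
  | n + 1, pt =>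
    match findRowI a (rows.getD n []) pt with
    | some Δ => (Δ, pt) :: selAuxI a rows n Δ.1
    | none => selAuxI a rows n pt

/-- The Langlands integral algorithm `ℐ^Lang_{[a,b]}`. -/
def ILang (a b : ℤ) (m : Multiset Seg) : Multiset Seg :=
  let m1 := mRange m a b
  let rows := dsDecomp m1.card m1
  let sel := selAuxI a rows rows.length a
  let base := sel.foldl (fun acc p => pushSeg (acc.erase p.1) p.2 p.1.2) m
  match sel.getLast? with
  | none => pushSeg base a b
  | some (Δl, _) => pushSeg base Δl.1 b

/-- `m` is in good range for `[a,b]`. -/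
def GoodRange (m : Multiset Seg) (a b : ℤ) : Prop := mRange m a b = m

/-- `Θ`, the Gelfand–Kazhdan involution on multisegments. -/
def Theta (m : Multiset Seg) : Multiset Seg := m.map fun Δ => (-Δ.2, -Δ.1)

/-- The exotic duality `𝔻_r`. -/
def Dual (r : ℤ) (m : Multiset Seg) : Multiset Seg :=
  m.map fun Δ => (-r + Δ.2 + 1, Δ.1 - 1)

/-- `𝔻_r^{[a,b]}`. -/
def DualAB (r a b : ℤ) (m : Multiset Seg) : Multiset Seg := Dual r m + {(b - r + 1, b)}

/-- The left Langlands derivative algorithm `𝒟^{Lang,L}_{[a,b]}`. -/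
def DLangL (a b : ℤ) (m : Multiset Seg) : Option (Multiset Seg) :=
  (DLang (-b) (-a) (Theta m)).map Theta

/-- The left `ρ`-derivative algorithm `𝒟^{Lang,L}_{[a]}`. -/
def DrhoL (a : ℤ) (m : Multiset Seg) : Option (Multiset Seg) :=
  (Drho (-a) (Theta m)).map Theta

/-- The next segment chosen by the MW algorithm after `p`. -/
def mwNext (m : Multiset Seg) (p : Seg) : Option Seg :=
  (msetMax (((endAt m (p.2 - 1)).filter fun Δ => Prec Δ p).map Prod.fst)).map
    fun x => (x, p.2 - 1)

def mwAux (m : Multiset Seg) : ℕ → Seg → List Seg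
  | 0, _ => []
  | k + 1, p =>
    match mwNext m p with
    | none => []
    | some Δ => Δ :: mwAux m k Δ

/-- The ordered segments participating in the MW algorithm for `m`. -/
def mwList (m : Multiset Seg) : List Seg :=
  match msetMax (m.map Prod.snd) with
  | none => []
  | some b0 =>
    match shortEnd m b0 with
    | none => []
    | some Δ0 => Δ0 :: mwAux m m.card Δ0

/-- `𝒟^MW(m)`. -/
def DMW (m : Multiset Seg) : Multiset Seg :=
  (mwList m).foldl (fun acc Δ => pushSeg (acc.erase Δ) Δ.1 (Δ.2 - 1)) m

/-- The first segment `Δ(m)` produced by the MW algorithm for `m`. -/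
def mwFirstSeg (m : Multiset Seg) : Option Seg :=
  match (mwList m).head?, (mwList m).getLast? with
  | some Δ0, some Δk => some (Δk.1, Δ0.2)
  | _, _ => none

/-- The total relative length of a multisegment. -/
def totalLen (m : Multiset Seg) : ℕ := (m.map fun Δ => (Δ.2 - Δ.1 + 1).toNat).sum

def sharpAux : ℕ → Multiset Seg → Multiset Seg
  | 0, _ => 0
  | k + 1, m =>
    if m = 0 then 0
    else
      match mwFirstSeg m with
      | none => 0
      | some Δ => Δ ::ₘ sharpAux k (DMW m)

/-- The Mœglin–Waldspurger involution `m^#`. -/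
def msharp (m : Multiset Seg) : Multiset Seg := sharpAux (totalLen m) m

/-- `ε^MW_{[a,c]}(m)`, the multiplicity of `[a,c]` in `m^#`. -/
def epsMW (a c : ℤ) (m : Multiset Seg) : ℕ := (msharp m).count (a, c)

/-- `m_i`: remove from `m` the participants of the first `i` runs of the MW
algorithm. -/
def mwStage (m : Multiset Seg) : ℕ → Multiset Seg
  | 0 => m
  | i + 1 => mwStage m i - (mwList (DMW^[i] m) : Multiset Seg)

/-- `MW_k(m)`: all segments ending at `k` participating in the first `r` runs
of the MW algorithm. -/
def MWkSet (m : Multiset Seg) (r : ℕ) (k : ℤ) : Multiset Seg :=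
  ∑ i ∈ Finset.range r, (mwList (DMW^[i] m) : Multiset Seg).filter fun Δ => Δ.2 = k

def upNbrAux (m : Multiset Seg) : ℕ → Seg → Option (List Seg)
  | 0, p => some [p]
  | k + 1, p =>
    match msetMin (((endAt m (p.2 + 1)).filter fun Δ => Prec p Δ).map Prod.fst) with
    | none => none
    | some x => (upNbrAux m k (x, p.2 + 1)).map fun l => p :: l

/-- The removal upward sequence of maximal linked segments in neighbors on `m`
ranging from `a-1` to `b` (if it exists). -/
def upSeqNbr (m : Multiset Seg) (a b : ℤ) : Option (List Seg) :=
  match longEnd m (a - 1) with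
  | none => none
  | some Δ => upNbrAux m (b - (a - 1)).toNat Δ

def zelRemF (a b : ℤ) : ℕ → Multiset Seg → Multiset Seg
  | 0, m => m
  | k + 1, m =>
    match upSeqNbr m a b with
    | none => m
    | some l => zelRemF a b k (m - (l : Multiset Seg))

/-- Repeatedly remove removal upward sequences of maximal linked segments in
neighbors ranging from `a-1` to `b`, until none exists. -/
def zelRem (a b : ℤ) (m : Multiset Seg) : Multiset Seg := zelRemF a b m.card m

def zelRemCountF (a b : ℤ) : ℕ → Multiset Seg → ℕ
  | 0, _ => 0
  | k + 1, m =>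
    match upSeqNbr m a b with
    | none => 0
    | some l => zelRemCountF a b k (m - (l : Multiset Seg)) + 1

/-- The number of removal upward sequences of maximal linked segments in
neighbors ranging from `a-1` to `b` successively removed from `m`. -/
def zelRemCount (a b : ℤ) (m : Multiset Seg) : ℕ := zelRemCountF a b m.card m

def downNbrAux (m : Multiset Seg) : ℕ → Seg → Option (List Seg)
  | 0, p => some [p]
  | k + 1, p =>
    match msetMax (((endAt m (p.2 - 1)).filter fun Δ => Prec Δ p).map Prod.fst) with
    | none => none
    | some x => (downNbrAux m k (x, p.2 - 1)).map fun l => p :: l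

/-- The Zelevinsky derivative algorithm `𝒟^Zel_{[a,b]}`; `none` codes `∞`. -/
def DZel (a b : ℤ) (m : Multiset Seg) : Option (Multiset Seg) :=
  match shortEnd (zelRem a b m) b with
  | none => none
  | some Δb =>
    match downNbrAux (zelRem a b m) (b - a).toNat Δb with
    | none => none
    | some l => some (l.foldl (fun acc Δ => pushSeg (acc.erase Δ) Δ.1 (Δ.2 - 1)) m)

/-- The downward sequence of minimal linked segments in neighbors on `m`
ranging from `b` to `a-1` (if it exists). -/
def downSeqNbr (m : Multiset Seg) (a b : ℤ) : Option (List Seg) :=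
  match shortEnd m b with
  | none => none
  | some Δ => downNbrAux m (b - (a - 1)).toNat Δ

def izRemF (a b : ℤ) : ℕ → Multiset Seg → Multiset Seg
  | 0, m => m
  | k + 1, m =>
    match downSeqNbr m a b with
    | none => m
    | some l => izRemF a b k (m - (l : Multiset Seg))

/-- Repeatedly remove downward sequences of minimal linked segments in
neighbors ranging from `b` to `a-1`, until none exists. -/
def izRem (a b : ℤ) (m : Multiset Seg) : Multiset Seg := izRemF a b m.card m

def extNext (m : Multiset Seg) (p : Seg) : Option Seg :=
  (msetMin (((endAt m (p.2 + 1)).filter fun Δ => Prec p Δ).map Prod.fst)).map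
    fun x => (x, p.2 + 1)

def extAux (m : Multiset Seg) : ℕ → Option Seg → List (Option Seg)
  | 0, _ => []
  | k + 1, p =>
    let cur := p.bind (extNext m)
    cur :: extAux m k cur

/-- The (possibly void) segments `Δ̃_{a-1}, …, Δ̃_{b-1}` participating in the
extension process of the Zelevinsky integral algorithm on `m`. -/
def extList (m : Multiset Seg) (a b : ℤ) : List (Option Seg) :=
  longEnd m (a - 1) :: extAux m (b - a).toNat (longEnd m (a - 1))

def applyExt : Multiset Seg → ℤ → List (Option Seg) → Multiset Seg
  | acc, _, [] => acc
  | acc, i, some Δ :: rest => applyExt (pushSeg (acc.erase Δ) Δ.1 (Δ.2 + 1)) (i + 1) rest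
  | acc, i, none :: rest => applyExt (acc + {(i + 1, i + 1)}) (i + 1) rest

/-- The Zelevinsky integral algorithm `ℐ^Zel_{[a,b]}`. -/
def IZel (a b : ℤ) (m : Multiset Seg) : Multiset Seg :=
  applyExt m (a - 1) (extList (izRem a b m) a b)

/-- `Δ̃⁺` for a possibly void `Δ̃` at position `i` (for the void segment at
position `i` this is the singleton `[i+1,i+1]`). -/
def plusAt (i : ℤ) : Option Seg → Seg
  | some Δ => (Δ.1, Δ.2 + 1)
  | none => (i + 1, i + 1)

def plusList : ℤ → List (Option Seg) → List Seg
  | _, [] => []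
  | i, o :: rest => plusAt i o :: plusList (i + 1) rest

/-- `n₁` and `n₂` are linked by mapping: there is an injective map `f : n₁ → n₂`
with `Δ ≺ f(Δ)` for all `Δ ∈ n₁`. -/
def LinkedByMapping (n₁ n₂ : Multiset Seg) : Prop :=
  ∃ n₂' ≤ n₂, Multiset.Rel Prec n₁ n₂'

def startsSorted (n : Multiset Seg) : List ℤ := (n.map Prod.fst).sort (· ≤ ·)

/-- `n₁' < n₁` for multisegments of segments ending at a common point, compared
via their sorted lists of starting points. -/
def MSLtStarts (n₁' n₁ : Multiset Seg) : Prop :=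
  startsSorted n₁' ≠ startsSorted n₁ ∧
    List.Forall₂ (· ≤ ·) (startsSorted n₁) (startsSorted n₁')

/-- `n₁ ⊆ m⟨k-1⟩` and `n₂ ⊆ m⟨k⟩` are minimally linked in `m`. -/
def MinLinked (m : Multiset Seg) (k : ℤ) (n₁ n₂ : Multiset Seg) : Prop :=
  n₁ ≤ endAt m (k - 1) ∧ n₂ ≤ endAt m k ∧ LinkedByMapping n₁ n₂ ∧
    (∀ n₁' ≤ endAt m (k - 1), LinkedByMapping n₁' n₂ → n₁'.card ≤ n₁.card) ∧
    (∀ n₁' ≤ endAt m (k - 1), n₁'.card = n₁.card → MSLtStarts n₁' n₁ →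
      ¬LinkedByMapping n₁' n₂)

/-- The non-free sections of a row of an upward-sequence decomposition. -/
def nfRow : List Seg → Multiset Seg
  | [] => 0
  | [_] => 0
  | Δ :: Δ' :: rest => pushSeg (nfRow (Δ' :: rest)) (Δ'.1 - 1) Δ.2

/-- `𝔡(m)`, the sum of all non-free sections. -/
def frakd (m : Multiset Seg) : Multiset Seg :=
  (usDecomp m.card m).foldl (fun acc row => acc + nfRow row) 0

def DrhoPow (t : ℤ) : ℕ → Multiset Seg → Option (Multiset Seg)
  | 0, m => some m
  | k + 1, m => (Drho t m).bind (DrhoPow t k)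

/-- `(𝒟_{[a+n-1]})^{ε_{a+n-1}} ∘ ⋯ ∘ (𝒟_{[a]})^{ε_a}(m)` where at each stage `t`
the exponent is `ε_t = ε_{[t]}` of the current multisegment; `none` codes that
some derivative in the composition is `∞`. -/
def hdComp : ℕ → ℤ → Multiset Seg → Option (Multiset Seg)
  | 0, _, m => some m
  | k + 1, t, m =>
    match DrhoPow t (epsA t m) m with
    | none => none
    | some m' => hdComp k (t + 1) m'


section RhoDuality

open Multiset

lemma mem_of_msetMin_eq_some {s : Multiset ℤ} {y : ℤ} (h : msetMin s = some y) : y ∈ s := by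
  unfold msetMin at h
  split_ifs at h with hs
  cases h
  exact Multiset.mem_toFinset.mp (Finset.min'_mem _ _)

lemma mem_of_msetMax_eq_some {s : Multiset ℤ} {y : ℤ} (h : msetMax s = some y) : y ∈ s := by
  unfold msetMax at h
  split_ifs at h with hs
  cases h
  exact Multiset.mem_toFinset.mp (Finset.max'_mem _ _)

lemma msetMax_map_of_antitone {f : ℤ → ℤ} (hf : Antitone f) (s : Multiset ℤ) :
    msetMax (s.map f) = (msetMin s).map f := by
  unfold msetMax msetMin
  by_cases hs : s = 0
  · simp [hs]
  rw [dif_neg (by simpa using hs), dif_neg hs, Option.map_some]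
  congr 1
  apply le_antisymm
  · refine Finset.max'_le _ _ _ fun y hy => ?_
    obtain ⟨x, hx, rfl⟩ := Finset.mem_image.mp (Multiset.toFinset_map f s ▸ hy)
    exact hf (Finset.min'_le _ x hx)
  · exact Finset.le_max' _ _ (by
      rw [Multiset.toFinset_map]; exact Finset.mem_image_of_mem f (Finset.min'_mem _ _))

lemma msetMin_map_of_antitone {f : ℤ → ℤ} (hf : Antitone f) (s : Multiset ℤ) :
    msetMin (s.map f) = (msetMax s).map f := by
  unfold msetMax msetMin
  by_cases hs : s = 0
  · simp [hs]
  rw [dif_neg (by simpa using hs), dif_neg hs, Option.map_some]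
  congr 1
  apply le_antisymm
  · exact Finset.min'_le _ _ (by
      rw [Multiset.toFinset_map]; exact Finset.mem_image_of_mem f (Finset.max'_mem _ _))
  · refine Finset.le_min' _ _ _ fun y hy => ?_
    obtain ⟨x, hx, rfl⟩ := Finset.mem_image.mp (Multiset.toFinset_map f s ▸ hy)
    exact hf (Finset.le_max' _ x hx)

lemma mem_startAt_of_snd_mem {n : Multiset Seg} {i y : ℤ}
    (h : y ∈ (startAt n i).map Prod.snd) : (i, y) ∈ startAt n i := by
  obtain ⟨Δ, hΔ, rfl⟩ := Multiset.mem_map.mp h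
  have hΔi : Δ.1 = i := (Multiset.mem_filter.mp hΔ).2
  rwa [show (i, Δ.2) = Δ from Prod.ext hΔi.symm rfl]

lemma mem_startAt_of_shortStart_eq_some {n : Multiset Seg} {i : ℤ} {Δ : Seg}
    (h : shortStart n i = some Δ) : Δ ∈ startAt n i := by
  unfold shortStart at h
  obtain ⟨y, hy, rfl⟩ := Option.map_eq_some_iff.mp h
  exact mem_startAt_of_snd_mem (mem_of_msetMin_eq_some hy)

lemma mem_startAt_of_longStart_eq_some {n : Multiset Seg} {i : ℤ} {Δ : Seg}
    (h : longStart n i = some Δ) : Δ ∈ startAt n i := by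
  unfold longStart at h
  obtain ⟨y, hy, rfl⟩ := Option.map_eq_some_iff.mp h
  exact mem_startAt_of_snd_mem (mem_of_msetMax_eq_some hy)

lemma mem_startAt_iff {n : Multiset Seg} {i : ℤ} {Δ : Seg} :
    Δ ∈ startAt n i ↔ Δ ∈ n ∧ Δ.1 = i :=
  Multiset.mem_filter

lemma startAt_add_singleton_of_ne (n : Multiset Seg) {x : Seg} {i : ℤ} (hx : x.1 ≠ i) :
    startAt (n + {x}) i = startAt n i := by
  simp [startAt, Multiset.filter_add, Multiset.filter_singleton, hx]

lemma longStart_add_singleton_of_ne (n : Multiset Seg) {x : Seg} {i : ℤ} (hx : x.1 ≠ i) :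
    longStart (n + {x}) i = longStart n i := by
  rw [longStart, startAt_add_singleton_of_ne n hx, longStart]

lemma erase_add_singleton_of_ne (s : Multiset Seg) {x y : Seg} (h : x ≠ y) :
    (s + {x}).erase y = s.erase y + {x} := by
  rw [add_comm, Multiset.singleton_add, Multiset.erase_cons_tail _ h, add_comm,
    Multiset.singleton_add]

lemma pushSeg_add_singleton (s : Multiset Seg) (x : Seg) (u v : ℤ) :
    pushSeg (s + {x}) u v = pushSeg s u v + {x} := by
  unfold pushSeg
  split_ifs
  · rw [add_right_comm]
  · rfl

lemma pushSeg_of_le (s : Multiset Seg) {u v : ℤ} (h : u ≤ v) : pushSeg s u v = s + {(u, v)} :=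
  if_pos h

lemma tusStep_lt {a : ℤ} {n n' : Multiset Seg} (h : tusStep n a = some n') : n' < n := by
  unfold tusStep at h
  cases hs : shortStart n a with
  | none => simp [hs] at h
  | some Δ' =>
    have hΔ' : Δ' ∈ n := (mem_startAt_iff.mp (mem_startAt_of_shortStart_eq_some hs)).1
    simp only [hs] at h
    cases hy : msetMin (((startAt n (a + 1)).filter fun Δ => Prec Δ' Δ).map Prod.snd) with
    | none => simp [hy] at h
    | some y =>
      simp only [hy, Option.some.injEq] at h
      rw [← h]
      exact lt_of_le_of_lt (Multiset.erase_le _ _) (Multiset.erase_lt.mpr hΔ')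

lemma tusIterF_le (a : ℤ) (k : ℕ) (n : Multiset Seg) : tusIterF a k n ≤ n := by
  induction k generalizing n with
  | zero => exact le_rfl
  | succ k ih =>
    rw [tusIterF]
    cases h : tusStep n a with
    | none => exact le_rfl
    | some n' => exact (ih n').trans (tusStep_lt h).le

lemma tusStep_zero (a : ℤ) : tusStep 0 a = none := by
  simp [tusStep, shortStart, startAt, msetMin]

lemma tusIterF_zero (a : ℤ) (k : ℕ) : tusIterF a k 0 = 0 := by
  cases k <;> simp [tusIterF, tusStep_zero]

lemma tusIterF_add_fuel (a : ℤ) {k : ℕ} (j : ℕ) {n : Multiset Seg} (h : card n ≤ k) :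
    tusIterF a (k + j) n = tusIterF a k n := by
  induction k generalizing n with
  | zero => rw [Multiset.card_eq_zero.mp (Nat.le_zero.mp h), tusIterF_zero, tusIterF_zero]
  | succ k ih =>
    rw [Nat.add_right_comm, tusIterF, tusIterF]
    cases hs : tusStep n a with
    | none => rfl
    | some n' =>
      have := Multiset.card_lt_card (tusStep_lt hs)
      exact ih (by omega)

lemma tusStep_add_singleton {a : ℤ} (n : Multiset Seg) {x : Seg} (h₀ : x.1 ≠ a)
    (h₁ : x.1 ≠ a + 1) : tusStep (n + {x}) a = (tusStep n a).map (· + {x}) := by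
  unfold tusStep shortStart
  rw [startAt_add_singleton_of_ne n h₀, startAt_add_singleton_of_ne n h₁]
  cases msetMin ((startAt n a).map Prod.snd) with
  | none => rfl
  | some y₀ =>
    simp only [Option.map_some]
    cases msetMin (((startAt n (a + 1)).filter fun Δ => Prec (a, y₀) Δ).map Prod.snd) with
    | none => rfl
    | some y₁ =>
      simp only [Option.map_some]
      rw [erase_add_singleton_of_ne _ (by grind), erase_add_singleton_of_ne _ (by grind)]

lemma tusIterF_add_singleton {a : ℤ} (k : ℕ) (n : Multiset Seg) {x : Seg} (h₀ : x.1 ≠ a)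
    (h₁ : x.1 ≠ a + 1) : tusIterF a k (n + {x}) = tusIterF a k n + {x} := by
  induction k generalizing n with
  | zero => rfl
  | succ k ih =>
    rw [tusIterF, tusIterF, tusStep_add_singleton n h₀ h₁]
    cases tusStep n a with
    | none => rfl
    | some n' => exact ih n'

lemma tusIter_add_singleton {a : ℤ} (n : Multiset Seg) {x : Seg} (h₀ : x.1 ≠ a)
    (h₁ : x.1 ≠ a + 1) : tusIter a (n + {x}) = tusIter a n + {x} := by
  rw [tusIter, tusIterF_add_singleton _ n h₀ h₁, Multiset.card_add, Multiset.card_singleton,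
    tusIterF_add_fuel a 1 le_rfl, tusIter]

lemma Irho_add_singleton {a : ℤ} (n : Multiset Seg) {x : Seg} (h₀ : x.1 ≠ a)
    (h₁ : x.1 ≠ a + 1) : Irho a (n + {x}) = Irho a n + {x} := by
  unfold Irho
  rw [tusIter_add_singleton n h₀ h₁, longStart_add_singleton_of_ne _ h₁]
  cases hΔ : longStart (tusIter a n) (a + 1) with
  | none => exact add_right_comm _ _ _
  | some Δ =>
    have hΔ₁ : Δ.1 = a + 1 := (mem_startAt_iff.mp (mem_startAt_of_longStart_eq_some hΔ)).2
    simp only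
    rw [erase_add_singleton_of_ne _ fun h => h₁ (by rw [h, hΔ₁]), pushSeg_add_singleton]

lemma exists_longStart_of_card_Irho {a : ℤ} {n : Multiset Seg}
    (h : card (Irho a n) = card n) : ∃ Δ, longStart (tusIter a n) (a + 1) = some Δ := by
  unfold Irho at h
  cases hΔ : longStart (tusIter a n) (a + 1) with
  | some Δ => exact ⟨Δ, rfl⟩
  | none => simp [hΔ] at h

/-- `Θ ∘ 𝔻_r` on a single segment. -/
def thetaDual (r : ℤ) (Δ : Seg) : Seg := (1 - Δ.1, r - Δ.2 - 1)

lemma thetaDual_involutive (r : ℤ) : Function.Involutive (thetaDual r) := fun Δ =>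
  Prod.ext (by simp [thetaDual]) (by simp only [thetaDual]; ring)

lemma Theta_Dual (r : ℤ) (m : Multiset Seg) : Theta (Dual r m) = m.map (thetaDual r) := by
  rw [Theta, Dual, Multiset.map_map]
  refine Multiset.map_congr rfl fun Δ _ => ?_
  simp only [Function.comp_apply, thetaDual, Prod.mk.injEq]
  constructor <;> ring

lemma Theta_map_thetaDual (r : ℤ) (m : Multiset Seg) :
    Theta (m.map (thetaDual r)) = Dual r m := by
  rw [Theta, Dual, Multiset.map_map]
  refine Multiset.map_congr rfl fun Δ _ => ?_
  simp only [Function.comp_apply, thetaDual, Prod.mk.injEq]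
  constructor <;> ring

lemma DualAB_eq_Dual_add (r a b : ℤ) (m : Multiset Seg) :
    DualAB r a b m = Dual r (m + {(b + 1, b)}) := by
  rw [DualAB, Dual, Dual, Multiset.map_add, Multiset.map_singleton]
  congr 2
  ext <;> simp only <;> ring

variable {r : ℤ}

lemma startAt_map_thetaDual {i j : ℤ} (h : i + j = 1) (n : Multiset Seg) :
    startAt (n.map (thetaDual r)) i = (startAt n j).map (thetaDual r) := by
  rw [startAt, startAt, Multiset.filter_map]
  congr 1
  refine Multiset.filter_congr fun Δ _ => ?_
  simp only [Function.comp_apply, thetaDual]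
  omega

lemma map_snd_map_thetaDual (s : Multiset Seg) :
    (s.map (thetaDual r)).map Prod.snd = (s.map Prod.snd).map fun e => r - e - 1 := by
  rw [Multiset.map_map, Multiset.map_map]
  rfl

lemma antitone_sub_sub_one : Antitone fun e : ℤ => r - e - 1 := fun x y h => show r - y - 1 ≤ r - x - 1 by omega

lemma longStart_map_thetaDual {i j : ℤ} (h : i + j = 1) (n : Multiset Seg) :
    longStart (n.map (thetaDual r)) i = (shortStart n j).map (thetaDual r) := by
  rw [longStart, shortStart, startAt_map_thetaDual h, map_snd_map_thetaDual,
    msetMax_map_of_antitone antitone_sub_sub_one, Option.map_map, Option.map_map]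
  congr 1
  funext y
  simp only [Function.comp_apply, thetaDual, Prod.mk.injEq, and_true]
  omega

lemma shortStart_map_thetaDual {i j : ℤ} (h : i + j = 1) (n : Multiset Seg) :
    shortStart (n.map (thetaDual r)) i = (longStart n j).map (thetaDual r) := by
  rw [longStart, shortStart, startAt_map_thetaDual h, map_snd_map_thetaDual,
    msetMin_map_of_antitone antitone_sub_sub_one, Option.map_map, Option.map_map]
  congr 1
  funext y
  simp only [Function.comp_apply, thetaDual, Prod.mk.injEq, and_true]
  omega

lemma prec_thetaDual_iff {Δ Δ' : Seg} (h₁ : Δ.2 < r + Δ'.1) (h₂ : Δ.1 ≤ Δ'.2 + 1) :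
    Prec (thetaDual r Δ) (thetaDual r Δ') ↔ Prec Δ' Δ := by
  simp only [Prec, thetaDual]
  omega

/-- Under this condition `Θ ∘ 𝔻_r` reverses precedence between segments starting at `a` and at
`a + 1`, and the image of `⁺Δ` is nonvoid for every `Δ` starting at `a + 1`. -/
def DualRange (a r : ℤ) (n : Multiset Seg) : Prop :=
  ∀ Δ ∈ n, (Δ.1 ≤ a + 1 → a ≤ Δ.2) ∧ Δ.2 + 2 ≤ r + a

lemma DualRange.mono {a : ℤ} {s n : Multiset Seg} (hn : DualRange a r n) (h : s ≤ n) :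
    DualRange a r s :=
  fun Δ hΔ => hn Δ (Multiset.mem_of_le h hΔ)

variable {a : ℤ}

lemma tdsStep_map_thetaDual {n : Multiset Seg} (hn : DualRange a r n) :
    tdsStep (n.map (thetaDual r)) (-a) = (tusStep n a).map (map (thetaDual r)) := by
  unfold tdsStep tusStep
  rw [longStart_map_thetaDual (j := a) (by ring)]
  cases hs : shortStart n a with
  | none => rfl
  | some Δ' =>
    obtain ⟨hΔ'n, hΔ'₁⟩ := mem_startAt_iff.mp (mem_startAt_of_shortStart_eq_some hs)
    have hprec : (startAt (n.map (thetaDual r)) (-a)).filter (Prec · (thetaDual r Δ')) =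
        ((startAt n (a + 1)).filter (Prec Δ' ·)).map (thetaDual r) := by
      rw [startAt_map_thetaDual (j := a + 1) (by ring), Multiset.filter_map]
      congr 1
      refine Multiset.filter_congr fun Δ hΔ => ?_
      obtain ⟨hΔn, hΔ₁⟩ := mem_startAt_iff.mp hΔ
      have := (hn Δ hΔn).2
      have := (hn Δ' hΔ'n).1 (by omega)
      exact prec_thetaDual_iff (by omega) (by omega)
    simp only [Option.map_some]
    rw [hprec, map_snd_map_thetaDual, msetMax_map_of_antitone antitone_sub_sub_one]
    cases msetMin (((startAt n (a + 1)).filter (Prec Δ' ·)).map Prod.snd) with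
    | none => rfl
    | some y =>
      have hy : ((-a, r - y - 1) : Seg) = thetaDual r (a + 1, y) := by
        simp only [thetaDual, Prod.mk.injEq, and_true]; omega
      simp only [Option.map_some]
      rw [hy, ← Multiset.map_erase _ (thetaDual_involutive r).injective,
        ← Multiset.map_erase _ (thetaDual_involutive r).injective, Multiset.erase_comm]

lemma tdsIter_map_thetaDual {n : Multiset Seg} (hn : DualRange a r n) :
    tdsIter (-a) (n.map (thetaDual r)) = (tusIter a n).map (thetaDual r) := by
  rw [tdsIter, tusIter, Multiset.card_map]
  generalize card n = k
  induction k generalizing n with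
  | zero => rfl
  | succ k ih =>
    rw [tdsIterF, tusIterF, tdsStep_map_thetaDual hn]
    cases h : tusStep n a with
    | none => rfl
    | some n' => exact ih (hn.mono (tusStep_lt h).le)

lemma Drho_map_thetaDual {n : Multiset Seg} (hn : DualRange a r n) {Δ : Seg}
    (hΔ : longStart (tusIter a n) (a + 1) = some Δ) :
    Drho (-a) (n.map (thetaDual r)) = some ((Irho a n).map (thetaDual r)) := by
  obtain ⟨hΔn, hΔ₁⟩ := mem_startAt_iff.mp (mem_startAt_of_longStart_eq_some hΔ)
  obtain ⟨haΔ, hΔr⟩ := hn Δ (Multiset.mem_of_le (tusIterF_le _ _ _) hΔn)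
  rw [Drho, tdsIter_map_thetaDual hn, shortStart_map_thetaDual (j := a + 1) (by ring), hΔ,
    Irho, hΔ]
  simp only [Option.map_some]
  rw [pushSeg_of_le _ (haΔ (by omega)),
    pushSeg_of_le _ (by simp only [thetaDual]; omega), Multiset.map_add, Multiset.map_singleton,
    Multiset.map_erase _ (thetaDual_involutive r).injective]
  congr 3
  simp only [thetaDual, Prod.mk.injEq, and_true]
  ring

lemma DrhoL_Dual {n : Multiset Seg} (hn : DualRange a r n) (h : card (Irho a n) = card n) :
    DrhoL a (Dual r n) = some (Dual r (Irho a n)) := by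
  obtain ⟨Δ, hΔ⟩ := exists_longStart_of_card_Irho h
  rw [DrhoL, Theta_Dual, Drho_map_thetaDual hn hΔ, Option.map_some, Theta_map_thetaDual]

lemma exists_dualRange_add_singleton {m : Multiset Seg} {b : ℤ} (hab : a < b)
    (hgr : GoodRange m a b) :
    ∃ R : ℤ, 0 < R ∧ ∀ r : ℤ, R ≤ r → DualRange a r (m + {(b + 1, b)}) := by
  obtain ⟨E, hE⟩ := (m.map Prod.snd).toFinset.bddAbove
  refine ⟨max (E - a + 2) (b - a + 2), by omega, fun r hr Δ hΔ => ?_⟩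
  rcases Multiset.mem_add.mp hΔ with hΔm | hΔb
  · have hΔE : Δ.2 ≤ E := hE (by simpa using ⟨Δ.1, hΔm⟩)
    have := (Multiset.filter_eq_self.mp hgr Δ hΔm).2.2
    omega
  · rw [Multiset.mem_singleton.mp hΔb]
    omega

end RhoDuality

theorem stmt9_general (m : Multiset Seg) (a b : ℤ) (hab : a < b)
    (hgr : GoodRange m a b) :
    ∃ R : ℤ, 0 < R ∧ ∀ r : ℤ, R ≤ r →
      (Irho a m).card = m.card →
        DrhoL a (Dual r m) = some (Dual r (Irho a m)) ∧
          DrhoL a (DualAB r a b m) = some (DualAB r a b (Irho a m)) := by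
  obtain ⟨R, hR, hrange⟩ := exists_dualRange_add_singleton hab hgr
  refine ⟨R, hR, fun r hr hcard => ⟨?_, ?_⟩⟩
  · exact DrhoL_Dual ((hrange r hr).mono (Multiset.le_add_right _ _)) hcard
  · have hvoid : Irho a (m + {(b + 1, b)}) = Irho a m + {(b + 1, b)} :=
      Irho_add_singleton m (by simp only; omega) (by simp only; omega)
    rw [DualAB_eq_Dual_add, DualAB_eq_Dual_add, ← hvoid]
    refine DrhoL_Dual (hrange r hr) ?_
    rw [hvoid, Multiset.card_add, Multiset.card_add, hcard]

/-- for `b > a`, `m` in good range for `[a,b]` and all sufficiently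
large `r > 0`: if `|ℐ_{[a]}(m)| = |m|` then
`𝒟^{Lang,L}_{[a]}(𝔻_r(m)) = 𝔻_r(ℐ_{[a]}(m))` and
`𝒟^{Lang,L}_{[a]}(𝔻_r^{[a,b]}(m)) = 𝔻_r^{[a,b]}(ℐ_{[a]}(m))`. -/
theorem stmt9 (m : Multiset Seg) (hm : IsMS m) (a b : ℤ) (hab : a < b)
    (hgr : GoodRange m a b) :
    ∃ R : ℤ, 0 < R ∧ ∀ r : ℤ, R ≤ r →
      (Irho a m).card = m.card →
        DrhoL a (Dual r m) = some (Dual r (Irho a m)) ∧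
          DrhoL a (DualAB r a b m) = some (DualAB r a b (Irho a m)) :=
  stmt9_general m a b hab hgr

end Multiseg
end

section
/- Let m be a nonempty multisegment with maximal end c (the largest integer with m⟨c⟩ ≠ ∅), and let r ≥ 1 be such that (D^MW)^{r−1}(m) still has maximal end c. For 1 ≤ i ≤ r, let Δ_{c,i}, Δ_{c−1,i}, …, Δ_{a_i,i} be the ordered segments participating in the MW algorithm for (D^MW)^{i−1}(m) (so e(Δ_{k,i}) = k), and set m₀ = m and m_i = m_{i−1} − Δ_{c,i} − ⋯ − Δ_{a_i,i}. Then: (i) the ordered segments participating in the MW algorithm for m_i are exactly Δ_{c,i+1}, …, Δ_{a_{i+1},i+1}; in particular {Δ_{c,1}, …, Δ_{a_1,1}, …, Δ_{c,r}, …, Δ_{a_r,r}} is a submultisegment of m. (ii) Writing Δ(m) = [a,c] for the first segment produced by the MW algorithm for m, and for a ≤ k ≤ c setting MW_k(m) = {Δ_{k,1}, …, Δ_{k,x_k}} with x_k the largest index for which Δ_{k,x_k} is defined: (a) x_c ≥ x_{c−1} ≥ ⋯ ≥ x_a; (b) Δ_{k,1}, …, Δ_{k,x_k} are in increasing order; (c)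 for a ≤ k ≤ c−1, MW_k(m) and MW_{k+1}(m) are minimally linked in m. -/
namespace Multiseg

/-!
Write `m_i` for `m` with the participants of the first `i` runs removed. Then `(𝒟^MW)^i(m)` is
`m_i` plus the truncations `Δ⁻` of those participants, and such a truncation never precedes a
participant of a later run: removing segments can only lengthen the segment the MW algorithm
picks at each end, so a later participant ending where `Δ` ends starts no later than `Δ`. Hence
the truncations are invisible to the algorithm and the runs on `(𝒟^MW)^i(m)` and on `m_i`
coincide; the same comparison between `m_j ⊆ m_i` gives (ii)(a) and (ii)(b).

For (ii)(c), run `i` picks as `Δ_{k,i}` the shortest unused segment of `m⟨k⟩` preceding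
`Δ_{k+1,i}`, so `MW_k(m)` is the greedy matching of `MW_{k+1}(m)` into `m⟨k⟩`. By an exchange
argument any matching into `MW_{k+1}(m)` can be rearranged to pair starts in decreasing order,
and then the greedy one is at least as large and termwise starts no earlier, which is minimal
linkedness.
-/

theorem msetMax_eq_some {s : Multiset ℤ} {x : ℤ} :
    msetMax s = some x ↔ x ∈ s ∧ ∀ y ∈ s, y ≤ x := by
  unfold msetMax
  split_ifs with h
  · simp [h]
  · simp [Finset.max'_eq_iff]

theorem msetMax_eq_none {s : Multiset ℤ} : msetMax s = none ↔ s = 0 := by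
  unfold msetMax
  split_ifs <;> simp_all

theorem exists_msetMax_eq_some {s : Multiset ℤ} (h : s ≠ 0) : ∃ x, msetMax s = some x :=
  Option.ne_none_iff_exists'.mp (mt msetMax_eq_none.mp h)

theorem mem_endAt {m : Multiset Seg} {i : ℤ} {Δ : Seg} : Δ ∈ endAt m i ↔ Δ ∈ m ∧ Δ.2 = i :=
  Multiset.mem_filter

theorem map_msetMax_fst_eq_some {A : Multiset Seg} {b : ℤ} (hA : ∀ Δ ∈ A, Δ.2 = b) {Δ : Seg} :
    (msetMax (A.map Prod.fst)).map (fun x => (x, b)) = some Δ ↔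
      Δ ∈ A ∧ ∀ Δ' ∈ A, Δ'.1 ≤ Δ.1 := by
  simp only [Option.map_eq_some_iff, msetMax_eq_some, Multiset.mem_map,
    forall_exists_index, and_imp, forall_apply_eq_imp_iff₂]
  constructor
  · rintro ⟨_, ⟨⟨Δ', hΔ', rfl⟩, hmax⟩, rfl⟩
    rw [← hA Δ' hΔ']
    exact ⟨hΔ', hmax⟩
  · rintro ⟨hΔ, hmax⟩
    exact ⟨Δ.1, ⟨⟨Δ, hΔ, rfl⟩, hmax⟩, by rw [← hA Δ hΔ]⟩

theorem shortEnd_eq_some {m : Multiset Seg} {b : ℤ} {Δ : Seg} :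
    shortEnd m b = some Δ ↔ Δ ∈ m ∧ Δ.2 = b ∧ ∀ Δ' ∈ m, Δ'.2 = b → Δ'.1 ≤ Δ.1 := by
  rw [shortEnd, map_msetMax_fst_eq_some fun _ h => (mem_endAt.mp h).2]
  simp only [mem_endAt, and_imp, and_assoc]

theorem shortEnd_eq_none {m : Multiset Seg} {b : ℤ} :
    shortEnd m b = none ↔ ∀ Δ ∈ m, Δ.2 ≠ b := by
  simp [shortEnd, msetMax_eq_none, endAt, Multiset.filter_eq_nil]

theorem mwNext_eq_some {m : Multiset Seg} {p Δ : Seg} :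
    mwNext m p = some Δ ↔
      Δ ∈ m ∧ Δ.2 = p.2 - 1 ∧ Prec Δ p ∧
        ∀ Δ' ∈ m, Δ'.2 = p.2 - 1 → Prec Δ' p → Δ'.1 ≤ Δ.1 := by
  rw [mwNext, map_msetMax_fst_eq_some fun _ h => (mem_endAt.mp (Multiset.mem_of_mem_filter h)).2]
  simp only [Multiset.mem_filter, mem_endAt, and_imp, and_assoc]

theorem mwNext_eq_none {m : Multiset Seg} {p : Seg} :
    mwNext m p = none ↔ ∀ Δ ∈ m, Δ.2 = p.2 - 1 → ¬Prec Δ p := by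
  simp only [mwNext, Option.map_eq_none_iff, msetMax_eq_none, Multiset.map_eq_zero,
    Multiset.filter_eq_nil, mem_endAt, and_imp]

theorem IsMS.mono {m n : Multiset Seg} (hm : IsMS m) (h : n ≤ m) : IsMS n :=
  fun Δ hΔ => hm Δ (Multiset.mem_of_le h hΔ)

def IsMaxEnd (m : Multiset Seg) (c : ℤ) : Prop := msetMax (m.map Prod.snd) = some c

theorem isMaxEnd_iff {m : Multiset Seg} {c : ℤ} :
    IsMaxEnd m c ↔ (∃ Δ ∈ m, Δ.2 = c) ∧ ∀ Δ ∈ m, Δ.2 ≤ c := by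
  simp only [IsMaxEnd, msetMax_eq_some, Multiset.mem_map, forall_exists_index,
    and_imp, forall_apply_eq_imp_iff₂]

theorem IsMaxEnd.exists {m : Multiset Seg} {c : ℤ} (hc : IsMaxEnd m c) : ∃ Δ ∈ m, Δ.2 = c :=
  (isMaxEnd_iff.mp hc).1

theorem IsMaxEnd.le {m : Multiset Seg} {c : ℤ} (hc : IsMaxEnd m c) : ∀ Δ ∈ m, Δ.2 ≤ c :=
  (isMaxEnd_iff.mp hc).2

inductive MWChain (m : Multiset Seg) : Seg → List Seg → Prop
  | nil {p : Seg} : mwNext m p = none → MWChain m p []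
  | cons {p Δ : Seg} {l : List Seg} : mwNext m p = some Δ → MWChain m Δ l → MWChain m p (Δ :: l)

namespace MWChain

variable {m : Multiset Seg} {p : Seg} {l : List Seg}

theorem unique {l' : List Seg} (h : MWChain m p l) (h' : MWChain m p l') : l = l' := by
  induction h generalizing l' with
  | nil hp =>
    cases h' with
    | nil => rfl
    | cons hq => simp [hp] at hq
  | cons hp _ ih =>
    cases h' with
    | nil hq => simp [hp] at hq
    | cons hq hl' =>
      obtain rfl := Option.some_inj.mp (hp.symm.trans hq)
      rw [ih hl']

theorem next_mem (h : MWChain m p l) :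
    ∀ q ∈ p :: l, mwNext m q = none ∨ ∃ Δ ∈ l, mwNext m q = some Δ := by
  induction h with
  | nil hp => simp [hp]
  | cons hp _ ih =>
    rintro q (_ | ⟨_, hq⟩)
    · exact Or.inr ⟨_, List.mem_cons_self, hp⟩
    · obtain hnone | ⟨Δ, hΔ, hq⟩ := ih q hq
      · exact Or.inl hnone
      · exact Or.inr ⟨Δ, List.mem_cons_of_mem _ hΔ, hq⟩

theorem exists_prev (h : MWChain m p l) : ∀ Δ ∈ l, ∃ q ∈ p :: l, mwNext m q = some Δ := by
  induction h with
  | nil => simp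
  | cons hp _ ih =>
    rintro Δ (_ | ⟨_, hΔ⟩)
    · exact ⟨_, List.mem_cons_self, hp⟩
    · obtain ⟨q, hq, hqΔ⟩ := ih Δ hΔ
      exact ⟨q, List.mem_cons_of_mem _ hq, hqΔ⟩

end MWChain

theorem mem_of_mem_mwAux {m : Multiset Seg} {fuel : ℕ} {p q : Seg}
    (hq : q ∈ mwAux m fuel p) : q ∈ m := by
  induction fuel generalizing p with
  | zero => simp [mwAux] at hq
  | succ k ih =>
    unfold mwAux at hq
    split at hq
    · simp at hq
    · rename_i Δ hΔ
      rcases List.mem_cons.mp hq with rfl | hq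
      · exact (mwNext_eq_some.mp hΔ).1
      · exact ih hq

theorem pairwise_mwAux (m : Multiset Seg) (fuel : ℕ) (p : Seg) :
    (p :: mwAux m fuel p).Pairwise fun Δ Δ' => Δ'.2 < Δ.2 := by
  induction fuel generalizing p with
  | zero => simp [mwAux]
  | succ k ih =>
    unfold mwAux
    split
    · simp
    · rename_i Δ hΔ
      have hend : Δ.2 = p.2 - 1 := (mwNext_eq_some.mp hΔ).2.1
      refine List.pairwise_cons.mpr ⟨?_, ih Δ⟩
      rintro q (_ | ⟨_, hq⟩)
      · omega
      · have := List.rel_of_pairwise_cons (ih Δ) hq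
        omega

theorem mwChain_mwAux_or_length_eq (m : Multiset Seg) (fuel : ℕ) (p : Seg) :
    MWChain m p (mwAux m fuel p) ∨ (mwAux m fuel p).length = fuel := by
  induction fuel generalizing p with
  | zero => exact Or.inr rfl
  | succ k ih =>
    unfold mwAux
    split
    · exact Or.inl (MWChain.nil ‹_›)
    · rcases ih ‹Seg› with h | h
      · exact Or.inl (MWChain.cons ‹_› h)
      · exact Or.inr (by simp [h])

section MWList

variable {m : Multiset Seg} {c : ℤ} {Δ Δ' : Seg}

theorem pairwise_mwList (m : Multiset Seg) : (mwList m).Pairwise fun Δ Δ' => Δ'.2 < Δ.2 := by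
  unfold mwList
  split
  · simp
  · split
    · simp
    · exact pairwise_mwAux _ _ _

theorem mem_of_mem_mwList (h : Δ ∈ mwList m) : Δ ∈ m := by
  unfold mwList at h
  split at h
  · simp at h
  · split at h
    · simp at h
    · rename_i Δ0 h0
      rcases List.mem_cons.mp h with rfl | h
      · exact (shortEnd_eq_some.mp h0).1
      · exact mem_of_mem_mwAux h

theorem nodup_map_snd_mwList (m : Multiset Seg) : ((mwList m).map Prod.snd).Nodup :=
  List.pairwise_map.mpr ((pairwise_mwList m).imp fun h => h.ne')

theorem nodup_mwList (m : Multiset Seg) : (mwList m).Nodup :=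
  (nodup_map_snd_mwList m).of_map _

theorem mwList_le (m : Multiset Seg) : (mwList m : Multiset Seg) ≤ m :=
  (Multiset.le_iff_subset (Multiset.coe_nodup.mpr (nodup_mwList m))).mpr
    fun _ h => mem_of_mem_mwList h

theorem eq_of_mem_mwList_of_snd_eq (hΔ : Δ ∈ mwList m) (hΔ' : Δ' ∈ mwList m)
    (h : Δ.2 = Δ'.2) : Δ = Δ' :=
  List.inj_on_of_nodup_map (nodup_map_snd_mwList m) hΔ hΔ' h

theorem mwList_spec (hc : IsMaxEnd m c) :
    ∃ Δ0 t, shortEnd m c = some Δ0 ∧ mwList m = Δ0 :: t ∧ MWChain m Δ0 t := by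
  obtain ⟨Δ0, h0⟩ : ∃ Δ0, shortEnd m c = some Δ0 := by
    obtain ⟨Δ, hΔ, hend⟩ := hc.exists
    exact Option.ne_none_iff_exists'.mp fun h => shortEnd_eq_none.mp h Δ hΔ hend
  have hlist : mwList m = Δ0 :: mwAux m m.card Δ0 := by
    rw [mwList, show msetMax (m.map Prod.snd) = some c from hc]
    simp only [h0]
  refine ⟨Δ0, _, h0, hlist, ?_⟩
  refine (mwChain_mwAux_or_length_eq m m.card Δ0).resolve_right fun hlen => ?_
  have := Multiset.card_le_card (mwList_le m)
  simp [hlist, hlen] at this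

theorem mwList_eq_of_mwChain {t : List Seg} (hc : IsMaxEnd m c) (h0 : shortEnd m c = some Δ)
    (ht : MWChain m Δ t) : mwList m = Δ :: t := by
  obtain ⟨Δ0, t', h0', hlist, ht'⟩ := mwList_spec hc
  obtain rfl := Option.some_inj.mp (h0'.symm.trans h0)
  rw [hlist, ht'.unique ht]

theorem mem_mwList_of_mwNext (hc : IsMaxEnd m c) (hΔ : Δ ∈ mwList m)
    (h : mwNext m Δ = some Δ') : Δ' ∈ mwList m := by
  obtain ⟨Δ0, t, -, hlist, ht⟩ := mwList_spec hc
  rw [hlist] at hΔ ⊢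
  obtain hnone | ⟨Δ'', hΔ'', h''⟩ := ht.next_mem Δ hΔ
  · simp [hnone] at h
  · obtain rfl := Option.some_inj.mp (h.symm.trans h'')
    exact List.mem_cons_of_mem _ hΔ''

theorem mwNext_eq_none_of_mem_mwList (hc : IsMaxEnd m c) (hΔ : Δ ∈ mwList m)
    (h : ∀ Δ' ∈ mwList m, Δ'.2 ≠ Δ.2 - 1) : mwNext m Δ = none := by
  by_contra hne
  obtain ⟨Δ', hΔ'⟩ := Option.ne_none_iff_exists'.mp hne
  exact h Δ' (mem_mwList_of_mwNext hc hΔ hΔ') (mwNext_eq_some.mp hΔ').2.1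

theorem exists_mwNext_eq_of_mem_mwList (hc : IsMaxEnd m c) (hΔ : Δ ∈ mwList m)
    (hlt : Δ.2 < c) : ∃ Δ' ∈ mwList m, Δ'.2 = Δ.2 + 1 ∧ mwNext m Δ' = some Δ := by
  obtain ⟨Δ0, t, h0, hlist, ht⟩ := mwList_spec hc
  rw [hlist] at hΔ ⊢
  rcases List.mem_cons.mp hΔ with rfl | hΔ
  · exact absurd (shortEnd_eq_some.mp h0).2.1 hlt.ne
  · obtain ⟨q, hq, hqΔ⟩ := ht.exists_prev Δ hΔ
    exact ⟨q, hq, by have := (mwNext_eq_some.mp hqΔ).2.1; omega, hqΔ⟩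

end MWList

/-- `Δ⁻`, as a multisegment that is empty when `Δ` is a single point. -/
def trunc (Δ : Seg) : Multiset Seg := pushSeg 0 Δ.1 (Δ.2 - 1)

def truncSum (L : List Seg) : Multiset Seg := (L : Multiset Seg).bind trunc

theorem pushSeg_eq_add (m : Multiset Seg) (x y : ℤ) : pushSeg m x y = m + pushSeg 0 x y := by
  unfold pushSeg
  split_ifs <;> simp

theorem mem_truncSum {L : List Seg} {σ : Seg} :
    σ ∈ truncSum L ↔ ∃ Δ ∈ L, Δ.1 ≤ Δ.2 - 1 ∧ σ = (Δ.1, Δ.2 - 1) := by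
  simp only [truncSum, Multiset.mem_bind, Multiset.mem_coe, trunc, pushSeg]
  refine exists_congr fun Δ => and_congr_right fun _ => ?_
  split_ifs with h <;> simp [h]

theorem _root_.List.foldl_erase_add {α : Type*} [DecidableEq α] (g : α → Multiset α) :
    ∀ (L : List α) (acc : Multiset α), (L : Multiset α) ≤ acc →
      L.foldl (fun acc a => acc.erase a + g a) acc = acc - L + (L : Multiset α).bind g
  | [], acc, _ => by simp
  | a :: L, acc, h => by
    have hL : (L : Multiset α) ≤ acc.erase a := by
      simpa using Multiset.erase_le_erase a h
    rw [List.foldl_cons, List.foldl_erase_add g L _ (hL.trans (Multiset.le_add_right _ _)),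
      ← tsub_add_eq_add_tsub hL, ← Multiset.cons_coe, Multiset.sub_cons, Multiset.cons_bind,
      add_assoc]

theorem DMW_eq (m : Multiset Seg) : DMW m = m - mwList m + truncSum (mwList m) := by
  have hstep : (fun acc Δ => pushSeg (Multiset.erase acc Δ) Δ.1 (Δ.2 - 1)) =
      fun acc Δ => acc.erase Δ + trunc Δ :=
    funext₂ fun acc Δ => pushSeg_eq_add _ _ _
  rw [DMW, hstep, List.foldl_erase_add _ _ _ (mwList_le m)]
  rfl

theorem mem_DMW {m : Multiset Seg} {Δ : Seg} (h : Δ ∈ DMW m) :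
    Δ ∈ m ∨ ∃ Δ' ∈ mwList m, Δ'.1 ≤ Δ'.2 - 1 ∧ Δ = (Δ'.1, Δ'.2 - 1) := by
  rw [DMW_eq] at h
  rcases Multiset.mem_add.mp h with h | h
  · exact Or.inl (Multiset.mem_of_le tsub_le_self h)
  · exact Or.inr (mem_truncSum.mp h)

section Iterate

variable {m : Multiset Seg} {c : ℤ}

theorem isMS_DMW (hm : IsMS m) : IsMS (DMW m) := by
  intro Δ hΔ
  rcases mem_DMW hΔ with h | ⟨Δ', -, h, rfl⟩
  · exact hm Δ h
  · exact h

theorem isMS_iterate_DMW (hm : IsMS m) (i : ℕ) : IsMS (DMW^[i] m) := by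
  induction i with
  | zero => exact hm
  | succ i ih => rw [Function.iterate_succ_apply']; exact isMS_DMW ih

theorem snd_le_of_mem_DMW (hb : ∀ Δ ∈ m, Δ.2 ≤ c) : ∀ Δ ∈ DMW m, Δ.2 ≤ c := by
  intro Δ hΔ
  rcases mem_DMW hΔ with h | ⟨Δ', hΔ', -, rfl⟩
  · exact hb Δ h
  · have := hb Δ' (mem_of_mem_mwList hΔ')
    dsimp only
    omega

theorem isMaxEnd_of_isMaxEnd_DMW (hb : ∀ Δ ∈ m, Δ.2 ≤ c) (h : IsMaxEnd (DMW m) c) :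
    IsMaxEnd m c := by
  refine isMaxEnd_iff.mpr ⟨?_, hb⟩
  obtain ⟨Δ, hΔ, rfl⟩ := h.exists
  rcases mem_DMW hΔ with h | ⟨Δ', hΔ', -, rfl⟩
  · exact ⟨Δ, h, rfl⟩
  · have := hb Δ' (mem_of_mem_mwList hΔ')
    omega

theorem isMaxEnd_iterate_of_le (hc : IsMaxEnd m c) {i j : ℕ} (hj : IsMaxEnd (DMW^[j] m) c)
    (hij : i ≤ j) : IsMaxEnd (DMW^[i] m) c := by
  have hb : ∀ k, ∀ Δ ∈ DMW^[k] m, Δ.2 ≤ c := by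
    intro k
    induction k with
    | zero => exact hc.le
    | succ k ih => rw [Function.iterate_succ_apply']; exact snd_le_of_mem_DMW ih
  induction j, hij using Nat.le_induction with
  | base => exact hj
  | succ j _ ih =>
    rw [Function.iterate_succ_apply'] at hj
    exact ih (isMaxEnd_of_isMaxEnd_DMW (hb j) hj)

end Iterate

section Perturb

variable {n s : Multiset Seg} {c : ℤ}

theorem IsMaxEnd.add (hc : IsMaxEnd n c) (hs : ∀ σ ∈ s, σ.2 < c) : IsMaxEnd (n + s) c := by
  obtain ⟨Δ, hΔ, hend⟩ := hc.exists
  refine isMaxEnd_iff.mpr ⟨⟨Δ, Multiset.mem_add.mpr (Or.inl hΔ), hend⟩, fun σ hσ => ?_⟩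
  rcases Multiset.mem_add.mp hσ with h | h
  · exact hc.le σ h
  · exact (hs σ h).le

theorem IsMaxEnd.of_add (hc : IsMaxEnd (n + s) c) (hs : ∀ σ ∈ s, σ.2 < c) : IsMaxEnd n c := by
  obtain ⟨Δ, hΔ, hend⟩ := hc.exists
  refine isMaxEnd_iff.mpr ⟨?_, fun σ hσ => hc.le σ (Multiset.mem_add.mpr (Or.inl hσ))⟩
  rcases Multiset.mem_add.mp hΔ with h | h
  · exact ⟨Δ, h, hend⟩
  · exact absurd hend (hs Δ h).ne

theorem shortEnd_add_of_ne (hs : ∀ σ ∈ s, σ.2 ≠ c) : shortEnd (n + s) c = shortEnd n c := by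
  simp only [shortEnd, endAt, Multiset.filter_add, Multiset.filter_eq_nil.mpr hs, add_zero]

theorem mwNext_add_of_not_prec {p : Seg} (hs : ∀ σ ∈ s, σ.2 = p.2 - 1 → ¬Prec σ p) :
    mwNext (n + s) p = mwNext n p := by
  have hzero : (endAt s (p.2 - 1)).filter (Prec · p) = 0 :=
    Multiset.filter_eq_nil.mpr fun σ hσ => hs σ (mem_endAt.mp hσ).1 (mem_endAt.mp hσ).2
  simp only [mwNext, endAt, Multiset.filter_add] at hzero ⊢
  rw [hzero, add_zero]

theorem MWChain.add_of_not_prec {p : Seg} {t : List Seg} (h : MWChain n p t)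
    (hs : ∀ σ ∈ s, ∀ q ∈ p :: t, σ.2 = q.2 - 1 → ¬Prec σ q) : MWChain (n + s) p t := by
  induction h with
  | nil hp =>
    exact .nil (by rw [mwNext_add_of_not_prec fun σ hσ => hs σ hσ _ List.mem_cons_self]; exact hp)
  | cons hp _ ih =>
    refine .cons ?_ (ih fun σ hσ q hq => hs σ hσ q (List.mem_cons_of_mem _ hq))
    rw [mwNext_add_of_not_prec fun σ hσ => hs σ hσ _ List.mem_cons_self]
    exact hp

theorem mwList_add_of_not_prec (hc : IsMaxEnd n c) (hlt : ∀ σ ∈ s, σ.2 < c)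
    (hs : ∀ σ ∈ s, ∀ Δ ∈ mwList n, σ.2 = Δ.2 - 1 → ¬Prec σ Δ) : mwList (n + s) = mwList n := by
  obtain ⟨Δ0, t, h0, hlist, ht⟩ := mwList_spec hc
  rw [hlist] at hs ⊢
  refine mwList_eq_of_mwChain (hc.add hlt) ?_ (ht.add_of_not_prec hs)
  rw [shortEnd_add_of_ne fun σ hσ => (hlt σ hσ).ne, h0]

end Perturb

section Dominate

variable {n' n : Multiset Seg} {c : ℤ}

theorem exists_mwList_of_mwNext (hn : IsMS n) (hle : n' ≤ n) (hc : IsMaxEnd n c)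
    {p Δ Δ' : Seg} (hΔ : Δ ∈ mwList n) (hend : Δ.2 = p.2) (hst : p.1 ≤ Δ.1)
    (hnext : mwNext n' p = some Δ') : ∃ Δ'' ∈ mwList n, Δ''.2 = Δ'.2 ∧ Δ'.1 ≤ Δ''.1 := by
  obtain ⟨hΔ'n', hΔ'end, ⟨h1, h2, h3⟩, -⟩ := mwNext_eq_some.mp hnext
  have hΔ'n : Δ' ∈ n := Multiset.mem_of_le hle hΔ'n'
  have hgen := hn Δ (mem_of_mem_mwList hΔ)
  have hprec : Prec Δ' Δ := ⟨by omega, by omega, by omega⟩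
  cases hnextΔ : mwNext n Δ with
  | none => exact absurd hprec (mwNext_eq_none.mp hnextΔ Δ' hΔ'n (by omega))
  | some Δ'' =>
    obtain ⟨-, hΔ''end, -, hmax⟩ := mwNext_eq_some.mp hnextΔ
    exact ⟨Δ'', mem_mwList_of_mwNext hc hΔ hnextΔ, by omega, hmax Δ' hΔ'n (by omega) hprec⟩

theorem exists_mwList_of_le (hn : IsMS n) (hle : n' ≤ n) (hc : IsMaxEnd n c)
    (hc' : IsMaxEnd n' c) : ∀ Δ' ∈ mwList n', ∃ Δ ∈ mwList n, Δ.2 = Δ'.2 ∧ Δ'.1 ≤ Δ.1 := by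
  obtain ⟨Δ0', t', h0', hlist', ht'⟩ := mwList_spec hc'
  obtain ⟨Δ0, t, h0, hlist, -⟩ := mwList_spec hc
  have hhead : ∃ Δ ∈ mwList n, Δ.2 = Δ0'.2 ∧ Δ0'.1 ≤ Δ.1 := by
    obtain ⟨hΔ0'n', hΔ0'end, -⟩ := shortEnd_eq_some.mp h0'
    obtain ⟨-, hΔ0end, hmax⟩ := shortEnd_eq_some.mp h0
    exact ⟨Δ0, by simp [hlist], by omega,
      hmax Δ0' (Multiset.mem_of_le hle hΔ0'n') hΔ0'end⟩
  have hchain : ∀ {p t}, MWChain n' p t → (∃ Δ ∈ mwList n, Δ.2 = p.2 ∧ p.1 ≤ Δ.1) →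
      ∀ Δ' ∈ t, ∃ Δ ∈ mwList n, Δ.2 = Δ'.2 ∧ Δ'.1 ≤ Δ.1 := by
    intro p t h
    induction h with
    | nil => simp
    | cons hnext _ ih =>
      rintro ⟨Δ, hΔ, hend, hst⟩
      have hnew := exists_mwList_of_mwNext hn hle hc hΔ hend hst hnext
      rintro Δ' (_ | ⟨_, hΔ'⟩)
      · exact hnew
      · exact ih hnew Δ' hΔ'
  rw [hlist']
  rintro Δ' (_ | ⟨_, hΔ'⟩)
  · exact hhead
  · exact hchain ht' hhead Δ' hΔ'

theorem not_prec_of_mem_truncSum (hn : IsMS n) (hle : n' ≤ n) (hc : IsMaxEnd n c)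
    (hc' : IsMaxEnd n' c) :
    ∀ σ ∈ truncSum (mwList n), ∀ Δ' ∈ mwList n', σ.2 = Δ'.2 - 1 → ¬Prec σ Δ' := by
  intro σ hσ Δ' hΔ' hend hprec
  obtain ⟨Δs, hΔs, -, rfl⟩ := mem_truncSum.mp hσ
  obtain ⟨Δ, hΔ, hΔend, hst⟩ := exists_mwList_of_le hn hle hc hc' Δ' hΔ'
  obtain rfl := eq_of_mem_mwList_of_snd_eq hΔ hΔs (by dsimp only at hend; omega)
  exact absurd hprec.1 (not_lt.mpr hst)

end Dominate

section Stage

variable {m : Multiset Seg} {c : ℤ} {r : ℕ}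

def truncRuns (m : Multiset Seg) (i : ℕ) : Multiset Seg :=
  ∑ j ∈ Finset.range i, truncSum (mwList (DMW^[j] m))

theorem mwStage_antitone (m : Multiset Seg) : Antitone (mwStage m) :=
  antitone_nat_of_succ_le fun _ => tsub_le_self

theorem mwStage_le_self (m : Multiset Seg) (i : ℕ) : mwStage m i ≤ m :=
  mwStage_antitone m (Nat.zero_le i)

theorem mwStage_eq_sub (m : Multiset Seg) (i : ℕ) :
    mwStage m i = m - ∑ j ∈ Finset.range i, (mwList (DMW^[j] m) : Multiset Seg) := by
  induction i with
  | zero => simp [mwStage]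
  | succ i ih => rw [mwStage, ih, Finset.sum_range_succ, tsub_tsub]

theorem snd_lt_of_mem_truncRuns (hrun : ∀ i < r, IsMaxEnd (DMW^[i] m) c) {i : ℕ} (hi : i ≤ r) :
    ∀ σ ∈ truncRuns m i, σ.2 < c := by
  intro σ hσ
  obtain ⟨j, hj, hσ⟩ := Multiset.mem_sum.mp hσ
  obtain ⟨Δ, hΔ, -, rfl⟩ := mem_truncSum.mp hσ
  have := (hrun j (by simp at hj; omega)).le Δ (mem_of_mem_mwList hΔ)
  dsimp only
  omega

theorem iterate_DMW_succ_eq {i : ℕ} (hL : mwList (mwStage m i) = mwList (DMW^[i] m))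
    (hD : DMW^[i] m = mwStage m i + truncRuns m i) :
    DMW^[i + 1] m = mwStage m (i + 1) + truncRuns m (i + 1) := by
  set L := mwList (DMW^[i] m)
  have hLle : (L : Multiset Seg) ≤ mwStage m i := hL ▸ mwList_le _
  calc DMW^[i + 1] m = DMW^[i] m - L + truncSum L := by
        rw [Function.iterate_succ_apply', DMW_eq]
    _ = mwStage m i + truncRuns m i - L + truncSum L := by rw [← hD]
    _ = mwStage m (i + 1) + truncRuns m (i + 1) := by
        rw [← tsub_add_eq_add_tsub hLle, add_assoc, truncRuns, truncRuns, Finset.sum_range_succ]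
        rfl

theorem mwList_mwStage_and_iterate_DMW_eq (hm : IsMS m)
    (hrun : ∀ i < r, IsMaxEnd (DMW^[i] m) c) (i : ℕ) (hi : i < r) :
    mwList (mwStage m i) = mwList (DMW^[i] m) ∧ DMW^[i] m = mwStage m i + truncRuns m i := by
  induction i using Nat.strong_induction_on with
  | _ i ih =>
  rcases i with _ | i
  · simp [mwStage, truncRuns]
  obtain ⟨hL, hD⟩ := ih i (by omega) (by omega)
  have hD' := iterate_DMW_succ_eq hL hD
  have hlt := snd_lt_of_mem_truncRuns hrun hi.le
  have htop : IsMaxEnd (mwStage m (i + 1)) c := (hD' ▸ hrun _ hi).of_add hlt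
  refine ⟨?_, hD'⟩
  rw [hD', mwList_add_of_not_prec htop hlt]
  intro σ hσ
  obtain ⟨j, hj, hσ⟩ := Multiset.mem_sum.mp hσ
  have hj : j < i + 1 := Finset.mem_range.mp hj
  obtain ⟨hLj, hDj⟩ := ih j hj (by omega)
  rw [← hLj] at hσ
  exact not_prec_of_mem_truncSum (hm.mono (mwStage_le_self m j)) (mwStage_antitone m hj.le)
    ((hDj ▸ hrun j (by omega)).of_add (snd_lt_of_mem_truncRuns hrun (by omega))) htop σ hσ

theorem mwList_mwStage (hm : IsMS m) (hrun : ∀ i < r, IsMaxEnd (DMW^[i] m) c) {i : ℕ}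
    (hi : i < r) : mwList (mwStage m i) = mwList (DMW^[i] m) :=
  (mwList_mwStage_and_iterate_DMW_eq hm hrun i hi).1

theorem isMaxEnd_mwStage (hm : IsMS m) (hrun : ∀ i < r, IsMaxEnd (DMW^[i] m) c) {i : ℕ}
    (hi : i < r) : IsMaxEnd (mwStage m i) c :=
  ((mwList_mwStage_and_iterate_DMW_eq hm hrun i hi).2 ▸ hrun i hi).of_add
    (snd_lt_of_mem_truncRuns hrun hi.le)

theorem sum_mwList_le (hm : IsMS m) (hrun : ∀ i < r, IsMaxEnd (DMW^[i] m) c) :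
    ∑ i ∈ Finset.range r, (mwList (DMW^[i] m) : Multiset Seg) ≤ m := by
  suffices ∀ k ≤ r, ∑ i ∈ Finset.range k, (mwList (DMW^[i] m) : Multiset Seg) ≤ m from this r le_rfl
  intro k hk
  induction k with
  | zero => simp
  | succ k ih =>
    have hle := mwList_le (mwStage m k)
    rw [mwList_mwStage hm hrun hk, mwStage_eq_sub] at hle
    rw [Finset.sum_range_succ]
    exact (le_tsub_iff_left (ih (by omega))).mp hle

theorem exists_mwList_iterate_of_le (hm : IsMS m) (hrun : ∀ i < r, IsMaxEnd (DMW^[i] m) c)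
    {i j : ℕ} (hij : i ≤ j) (hj : j < r) :
    ∀ Δ' ∈ mwList (DMW^[j] m), ∃ Δ ∈ mwList (DMW^[i] m), Δ.2 = Δ'.2 ∧ Δ'.1 ≤ Δ.1 := by
  rw [← mwList_mwStage hm hrun hj, ← mwList_mwStage hm hrun (hij.trans_lt hj)]
  exact exists_mwList_of_le (hm.mono (mwStage_le_self m i)) (mwStage_antitone m hij)
    (isMaxEnd_mwStage hm hrun (hij.trans_lt hj)) (isMaxEnd_mwStage hm hrun hj)

end Stage

/-- `GreedyMatch P ys gs`: for the thresholds `ys` in turn, `gs` takes the largest element of the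
pool `P` below the threshold and removes it from the pool, stopping at the first failure. -/
inductive GreedyMatch : Multiset ℤ → List ℤ → List ℤ → Prop
  | nil (P : Multiset ℤ) : GreedyMatch P [] []
  | fail {P : Multiset ℤ} {y : ℤ} (ys : List ℤ) : (∀ x ∈ P, ¬x < y) → GreedyMatch P (y :: ys) []
  | step {P : Multiset ℤ} {y g : ℤ} {ys gs : List ℤ} : g ∈ P → g < y →
      (∀ x ∈ P, x < y → x ≤ g) → GreedyMatch (P.erase g) ys gs → GreedyMatch P (y :: ys) (g :: gs)

namespace GreedyMatch

variable {P : Multiset ℤ} {ys gs : List ℤ}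

theorem forall₂_lt (h : GreedyMatch P ys gs) : List.Forall₂ (· < ·) gs (ys.take gs.length) := by
  induction h with
  | nil => exact .nil
  | fail => exact .nil
  | step _ hlt _ _ ih => exact .cons hlt ih

theorem dominates (h : GreedyMatch P ys gs) {xs : List ℤ} (hxs : (xs : Multiset ℤ) ≤ P)
    (hsort : xs.Pairwise (· ≥ ·)) (hlt : List.Forall₂ (· < ·) xs (ys.take xs.length)) :
    xs.length ≤ gs.length ∧ List.Forall₂ (· ≤ ·) xs (gs.take xs.length) := by
  induction h generalizing xs with
  | nil =>
    cases xs with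
    | nil => simp
    | cons => simp at hlt
  | fail _ hP =>
    cases xs with
    | nil => simp
    | cons x xs =>
      simp only [List.length_cons, List.take_succ_cons, List.forall₂_cons] at hlt
      exact absurd hlt.1 (hP x (Multiset.mem_of_le hxs (by simp)))
  | @step P y g ys gs hg _ hmax _ ih =>
    cases xs with
    | nil => simp
    | cons x xs =>
      simp only [List.length_cons, List.take_succ_cons, List.forall₂_cons] at hlt ⊢
      rw [← Multiset.cons_coe] at hxs
      have hxg := hmax x (Multiset.mem_of_le hxs (Multiset.mem_cons_self _ _)) hlt.1
      have hxs' : (xs : Multiset ℤ) ≤ P.erase g := by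
        rcases hxg.eq_or_lt with rfl | hxg
        · simpa using Multiset.erase_le_erase x hxs
        · have hgx : g ∉ x ::ₘ (xs : Multiset ℤ) := by
            simp only [Multiset.mem_cons, Multiset.mem_coe, not_or]
            exact ⟨hxg.ne', fun hg' => (List.rel_of_pairwise_cons hsort hg').not_gt hxg⟩
          rw [← Multiset.cons_erase hg, Multiset.le_cons_of_notMem hgx] at hxs
          exact (Multiset.le_cons_self _ _).trans hxs
      obtain ⟨hlen, hf⟩ := ih hxs' hsort.of_cons hlt.2
      exact ⟨by omega, hxg, hf⟩

end GreedyMatch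

theorem rel_lt_erase_max {α : Type*} [LinearOrder α] {S Y : Multiset α} {x y : α}
    (h : Multiset.Rel (· < ·) S Y) (hx : x ∈ S) (hxmax : ∀ z ∈ S, z ≤ x) (hy : y ∈ Y)
    (hymax : ∀ z ∈ Y, z ≤ y) :
    x < y ∧ Multiset.Rel (· < ·) (S.erase x) (Y.erase y) := by
  rw [← Multiset.cons_erase hx] at h
  obtain ⟨y0, Y0, hxy0, hrel0, rfl⟩ := Multiset.rel_cons_left.mp h
  refine ⟨hxy0.trans_le (hymax y0 (Multiset.mem_cons_self _ _)), ?_⟩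
  by_cases hyy : y = y0
  · simpa [hyy] using hrel0
  have hyY0 : y ∈ Y0 := (Multiset.mem_cons.mp hy).resolve_left hyy
  rw [← Multiset.cons_erase hyY0] at hrel0
  obtain ⟨x1, S1, hx1y, hrel1, hS1⟩ := Multiset.rel_cons_right.mp hrel0
  have hx1 : x1 ≤ x := hxmax x1 (Multiset.mem_of_mem_erase (hS1 ▸ Multiset.mem_cons_self _ _))
  rw [Multiset.erase_cons_tail _ (Ne.symm hyy), hS1]
  exact Multiset.Rel.cons (hx1.trans_lt hxy0) hrel1

theorem exists_pairwise_forall₂_of_rel {ys : List ℤ} (hys : ys.Pairwise (· ≥ ·)) :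
    ∀ {S Y : Multiset ℤ}, Multiset.Rel (· < ·) S Y → Y ≤ ys →
      ∃ xs : List ℤ, xs.Pairwise (· ≥ ·) ∧ (xs : Multiset ℤ) = S ∧
        List.Forall₂ (· < ·) xs (ys.take xs.length) := by
  induction ys with
  | nil =>
    intro S Y hrel hY
    rw [Multiset.coe_nil, Multiset.le_zero] at hY
    rw [hY, Multiset.rel_zero_right] at hrel
    exact ⟨[], .nil, hrel.symm, .nil⟩
  | cons t ys ih =>
    intro S Y hrel hY
    by_cases hS : S = 0
    · exact ⟨[], .nil, hS.symm, .nil⟩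
    have hYne : Y ≠ 0 := fun h => hS (Multiset.rel_zero_right.mp (h ▸ hrel))
    obtain ⟨x, hx⟩ := exists_msetMax_eq_some hS
    obtain ⟨y, hy⟩ := exists_msetMax_eq_some hYne
    obtain ⟨hxS, hxmax⟩ := msetMax_eq_some.mp hx
    obtain ⟨hyY, hymax⟩ := msetMax_eq_some.mp hy
    obtain ⟨hxy, hrel'⟩ := rel_lt_erase_max hrel hxS hxmax hyY hymax
    rw [← Multiset.cons_coe] at hY
    have hyt : y ≤ t := by
      rcases Multiset.mem_cons.mp (Multiset.mem_of_le hY hyY) with h | h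
      · exact h.le
      · exact List.rel_of_pairwise_cons hys h
    have hY' : Y.erase y ≤ ys := by
      rcases hyt.eq_or_lt with rfl | hyt
      · exact Multiset.erase_le_iff_le_cons.mpr hY
      · have htY : t ∉ Y := fun ht => (hymax t ht).not_gt hyt
        exact (Multiset.erase_le y Y).trans ((Multiset.le_cons_of_notMem htY).mp hY)
    obtain ⟨xs, hsort, hcoe, hlt⟩ := ih hys.of_cons hrel' hY'
    refine ⟨x :: xs, List.pairwise_cons.mpr ⟨fun z hz => hxmax z ?_, hsort⟩, ?_, ?_⟩
    · exact Multiset.mem_of_mem_erase (hcoe ▸ Multiset.mem_coe.mpr hz)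
    · rw [← Multiset.cons_coe, hcoe, Multiset.cons_erase hxS]
    · exact .cons (hxy.trans_le hyt) hlt

theorem _root_.List.forall₂_le_antisymm {α : Type*} [PartialOrder α] : ∀ {l l' : List α},
    List.Forall₂ (· ≤ ·) l l' → List.Forall₂ (· ≤ ·) l' l → l = l'
  | [], [], _, _ => rfl
  | _ :: _, _ :: _, .cons h₁ t₁, .cons h₂ t₂ => by
    rw [le_antisymm h₁ h₂, List.forall₂_le_antisymm t₁ t₂]

theorem _root_.Multiset.sort_coe_of_pairwise_ge {α : Type*} [LinearOrder α] {l : List α}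
    (hl : l.Pairwise (· ≥ ·)) : Multiset.sort (l : Multiset α) (· ≤ ·) = l.reverse := by
  rw [← Multiset.coe_reverse, Multiset.coe_sort]
  exact List.mergeSort_eq_self _ (by simpa [List.pairwise_reverse] using hl)

theorem map_fst_coe_map_pair (l : List ℤ) (k : ℤ) :
    ((l.map (·, k) : List Seg) : Multiset Seg).map Prod.fst = l := by
  simp [Function.comp_def]

theorem _root_.Multiset.rel_coe_of_forall₂ {α β : Type*} {r : α → β → Prop} {l : List α}
    {l' : List β} (h : List.Forall₂ r l l') : Multiset.Rel r l l' := by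
  induction h with
  | nil => exact .zero
  | cons hab _ ih => exact .cons hab ih

theorem GreedyMatch.exists_of_linkedByMapping {m : Multiset Seg} {k : ℤ} {ys gs : List ℤ}
    (hgr : GreedyMatch ((endAt m k).map Prod.fst) ys gs) (hys : ys.Pairwise (· ≥ ·))
    {n₁ : Multiset Seg} (hle : n₁ ≤ endAt m k)
    (hlink : LinkedByMapping n₁ ((ys.map (·, k + 1) : List Seg) : Multiset Seg)) :
    ∃ xs : List ℤ, xs.Pairwise (· ≥ ·) ∧ (xs : Multiset ℤ) = n₁.map Prod.fst ∧
      xs.length ≤ gs.length ∧ List.Forall₂ (· ≤ ·) xs (gs.take xs.length) := by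
  obtain ⟨n₂, hn₂, hrel⟩ := hlink
  have hY : n₂.map Prod.fst ≤ ys := by
    simpa only [map_fst_coe_map_pair] using Multiset.map_le_map (f := Prod.fst) hn₂
  obtain ⟨xs, hsort, hcoe, hlt⟩ :=
    exists_pairwise_forall₂_of_rel hys (Multiset.rel_map.mpr (hrel.mono fun _ _ _ _ h => h.1)) hY
  obtain ⟨hlen, hle'⟩ := hgr.dominates (hcoe ▸ Multiset.map_le_map hle) hsort hlt
  exact ⟨xs, hsort, hcoe, hlen, hle'⟩

theorem minLinked_of_greedyMatch {m : Multiset Seg} {k : ℤ} {ys gs : List ℤ}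
    (hgr : GreedyMatch ((endAt m k).map Prod.fst) ys gs)
    (hys : ys.Pairwise (· ≥ ·)) (hgs : gs.Pairwise (· ≥ ·)) (hys_le : ∀ y ∈ ys, y ≤ k + 1)
    (h₁ : ((gs.map (·, k) : List Seg) : Multiset Seg) ≤ endAt m k)
    (h₂ : ((ys.map (·, k + 1) : List Seg) : Multiset Seg) ≤ endAt m (k + 1)) :
    MinLinked m (k + 1) (gs.map (·, k)) (ys.map (·, k + 1)) := by
  rw [MinLinked, add_sub_cancel_right]
  have hcard : ∀ {n₁ : Multiset Seg} {xs : List ℤ}, (xs : Multiset ℤ) = n₁.map Prod.fst →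
      n₁.card = xs.length := fun hcoe => by simpa using (congrArg Multiset.card hcoe).symm
  refine ⟨h₁, h₂, ?_, fun n₁ hle hlink => ?_, fun n₁ hle hcard₁ hlt hlink => ?_⟩
  · refine ⟨((ys.take gs.length).map (·, k + 1) : List Seg),
      Multiset.coe_le.mpr ((List.take_sublist _ _).map _).subperm, ?_⟩
    refine Multiset.rel_coe_of_forall₂ ?_
    have hlt := hgr.forall₂_lt
    rw [List.forall₂_map_left_iff, List.forall₂_map_right_iff]
    rw [List.forall₂_iff_zip] at hlt ⊢
    refine ⟨hlt.1, fun {g y} hgy => ⟨hlt.2 hgy, by omega, ?_⟩⟩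
    exact hys_le y (List.mem_of_mem_take (List.of_mem_zip hgy).2)
  · obtain ⟨xs, -, hcoe, hlen, -⟩ := hgr.exists_of_linkedByMapping hys hle hlink
    simpa [hcard hcoe] using hlen
  · obtain ⟨xs, hsort, hcoe, hlen, hle'⟩ := hgr.exists_of_linkedByMapping hys hle hlink
    have hxs : xs.length = gs.length := by simpa [← hcard hcoe] using hcard₁
    rw [hxs, List.take_length] at hle'
    have hstarts₁ : startsSorted n₁ = xs.reverse := by
      rw [startsSorted, ← hcoe, Multiset.sort_coe_of_pairwise_ge hsort]
    have hstarts : startsSorted (gs.map (·, k) : List Seg) = gs.reverse := by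
      rw [startsSorted, map_fst_coe_map_pair, Multiset.sort_coe_of_pairwise_ge hgs]
    rw [MSLtStarts, hstarts₁, hstarts] at hlt
    exact hlt.1 (List.forall₂_le_antisymm (List.forall₂_reverse_iff.mpr hle') hlt.2)

def mwAt (n : Multiset Seg) (k : ℤ) : Option Seg := (mwList n).find? fun Δ => Δ.2 = k

section MWAt

variable {n : Multiset Seg} {k c : ℤ} {Δ : Seg}

theorem mwAt_eq_some : mwAt n k = some Δ ↔ Δ ∈ mwList n ∧ Δ.2 = k := by
  constructor
  · intro h
    exact ⟨List.mem_of_find?_eq_some h, by simpa using List.find?_some h⟩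
  · rintro ⟨hΔ, rfl⟩
    cases h : mwAt n Δ.2 with
    | none => simpa using List.find?_eq_none.mp h Δ hΔ
    | some Δ' =>
      have hΔ' : Δ' ∈ mwList n ∧ Δ'.2 = Δ.2 :=
        ⟨List.mem_of_find?_eq_some h, by simpa using List.find?_some h⟩
      rw [eq_of_mem_mwList_of_snd_eq hΔ'.1 hΔ hΔ'.2]

theorem mwAt_eq_none : mwAt n k = none ↔ ∀ Δ ∈ mwList n, Δ.2 ≠ k := by
  simp [mwAt]

theorem filter_mwList_snd_eq (n : Multiset Seg) (k : ℤ) :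
    (mwList n : Multiset Seg).filter (fun Δ => Δ.2 = k) = ((mwAt n k).toList : Multiset Seg) := by
  rw [Multiset.Nodup.ext ((Multiset.coe_nodup.mpr (nodup_mwList n)).filter _)
    (Multiset.coe_nodup.mpr (Option.toList_nodup _))]
  intro Δ
  rw [Multiset.mem_filter, Multiset.mem_coe, Multiset.mem_coe, Option.mem_toList, mwAt_eq_some]

theorem mwNext_mwAt_succ (hc : IsMaxEnd n c) (h : mwAt n (k + 1) = some Δ) :
    mwNext n Δ = mwAt n k := by
  obtain ⟨hΔ, hΔend⟩ := mwAt_eq_some.mp h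
  cases h0 : mwAt n k with
  | none =>
    refine mwNext_eq_none_of_mem_mwList hc hΔ fun Δ' hΔ' hend => ?_
    exact mwAt_eq_none.mp h0 Δ' hΔ' (by omega)
  | some Δ0 =>
    obtain ⟨hΔ0, hΔ0end⟩ := mwAt_eq_some.mp h0
    have hlt : Δ0.2 < c := by have := hc.le Δ (mem_of_mem_mwList hΔ); omega
    obtain ⟨Δ', hΔ', hend, hnext⟩ := exists_mwNext_eq_of_mem_mwList hc hΔ0 hlt
    rwa [eq_of_mem_mwList_of_snd_eq hΔ' hΔ (by omega)] at hnext

theorem mwAt_eq_none_of_succ (hc : IsMaxEnd n c) (hk : k < c) (h : mwAt n (k + 1) = none) :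
    mwAt n k = none := by
  refine mwAt_eq_none.mpr fun Δ hΔ hend => ?_
  obtain ⟨Δ', hΔ', hend', -⟩ := exists_mwNext_eq_of_mem_mwList hc hΔ (by omega)
  exact mwAt_eq_none.mp h Δ' hΔ' (by omega)

end MWAt

/-- The starts of `Δ_{k,i+1}, Δ_{k,i+2}, …` (at most `q` of them), up to the first run not
reaching `k`. -/
def colStarts (m : Multiset Seg) (k : ℤ) : ℕ → ℕ → List ℤ
  | _, 0 => []
  | i, q + 1 =>
    match mwAt (DMW^[i] m) k with
    | none => []
    | some Δ => Δ.1 :: colStarts m k (i + 1) q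

section Columns

variable {m : Multiset Seg} {c k : ℤ} {r : ℕ}

theorem mwAt_mwStage (hm : IsMS m) (hrun : ∀ i < r, IsMaxEnd (DMW^[i] m) c) {i : ℕ}
    (hi : i < r) : mwAt (mwStage m i) k = mwAt (DMW^[i] m) k := by
  rw [mwAt, mwList_mwStage hm hrun hi, mwAt]

theorem endAt_mwStage_succ {i : ℕ} {Δ : Seg} (h : mwAt (DMW^[i] m) k = some Δ) :
    endAt (mwStage m (i + 1)) k = (endAt (mwStage m i) k).erase Δ := by
  rw [mwStage, endAt, Multiset.filter_sub, ← endAt, filter_mwList_snd_eq, h]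
  simp

theorem mwAt_iterate_of_le (hm : IsMS m) (hrun : ∀ i < r, IsMaxEnd (DMW^[i] m) c)
    {i j : ℕ} (hij : i ≤ j) (hj : j < r) {Δ : Seg} (h : mwAt (DMW^[j] m) k = some Δ) :
    ∃ Δ', mwAt (DMW^[i] m) k = some Δ' ∧ Δ.1 ≤ Δ'.1 := by
  obtain ⟨hΔ, rfl⟩ := mwAt_eq_some.mp h
  obtain ⟨Δ', hΔ', hend, hle⟩ := exists_mwList_iterate_of_le hm hrun hij hj Δ hΔ
  exact ⟨Δ', mwAt_eq_some.mpr ⟨hΔ', hend⟩, hle⟩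

theorem mem_colStarts {q i : ℕ} {z : ℤ} (hz : z ∈ colStarts m k i q) :
    ∃ j, i ≤ j ∧ j < i + q ∧ ∃ Δ, mwAt (DMW^[j] m) k = some Δ ∧ Δ.1 = z := by
  induction q generalizing i with
  | zero => simp [colStarts] at hz
  | succ q ih =>
    unfold colStarts at hz
    split at hz
    · simp at hz
    · rename_i Δ hΔ
      rcases List.mem_cons.mp hz with rfl | hz
      · exact ⟨i, le_rfl, by omega, Δ, hΔ, rfl⟩
      · obtain ⟨j, hij, hjq, hj⟩ := ih hz
        exact ⟨j, by omega, by omega, hj⟩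

theorem colStarts_le (hm : IsMS m) {q i : ℕ} : ∀ z ∈ colStarts m k i q, z ≤ k := by
  intro z hz
  obtain ⟨j, -, -, Δ, hΔ, rfl⟩ := mem_colStarts hz
  obtain ⟨hmem, rfl⟩ := mwAt_eq_some.mp hΔ
  exact isMS_iterate_DMW hm j Δ (mem_of_mem_mwList hmem)

theorem colStarts_pairwise (hm : IsMS m) (hrun : ∀ i < r, IsMaxEnd (DMW^[i] m) c)
    {q i : ℕ} (hiq : i + q ≤ r) : (colStarts m k i q).Pairwise (· ≥ ·) := by
  induction q generalizing i with
  | zero => exact .nil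
  | succ q ih =>
    unfold colStarts
    split
    · exact .nil
    · rename_i Δ hΔ
      refine List.pairwise_cons.mpr ⟨fun z hz => ?_, ih (by omega)⟩
      obtain ⟨j, hij, hjq, Δ', hΔ', rfl⟩ := mem_colStarts hz
      obtain ⟨Δ'', h'', hle⟩ := mwAt_iterate_of_le hm hrun (by omega : i ≤ j) (by omega) hΔ'
      rw [hΔ, Option.some_inj] at h''
      exact h'' ▸ hle

theorem sum_filter_mwList_eq_colStarts (hm : IsMS m) (hrun : ∀ i < r, IsMaxEnd (DMW^[i] m) c)
    {q i : ℕ} (hiq : i + q ≤ r) :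
    ∑ j ∈ Finset.range q, (mwList (DMW^[i + j] m) : Multiset Seg).filter (fun Δ => Δ.2 = k) =
      ((colStarts m k i q).map (·, k) : List Seg) := by
  simp only [filter_mwList_snd_eq]
  induction q generalizing i with
  | zero => simp [colStarts]
  | succ q ih =>
    rw [Finset.sum_range_succ', colStarts]
    split
    · rename_i hnone
      rw [Finset.sum_eq_zero fun j hj => ?_, add_zero, hnone]
      · rfl
      cases hΔ : mwAt (DMW^[i + (j + 1)] m) k with
      | none => rfl
      | some Δ =>
        obtain ⟨_, h, -⟩ := mwAt_iterate_of_le hm hrun (Nat.le_add_right i (j + 1))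
          (by simp at hj; omega) hΔ
        simp [hnone] at h
    · rename_i Δ hΔ
      simp only [← add_assoc, add_right_comm i _ 1, ih (i := i + 1) (by omega), add_zero, hΔ]
      obtain ⟨-, rfl⟩ := mwAt_eq_some.mp hΔ
      simp [add_comm]

end Columns

theorem _root_.Multiset.filter_finset_sum {α ι : Type*} (p : α → Prop) [DecidablePred p]
    (s : Finset ι) (f : ι → Multiset α) :
    (∑ i ∈ s, f i).filter p = ∑ i ∈ s, (f i).filter p :=
  map_sum (⟨⟨Multiset.filter p, Multiset.filter_zero p⟩, Multiset.filter_add p⟩ :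
    Multiset α →+ Multiset α) f s

section MinimallyLinked

variable {m : Multiset Seg} {c k : ℤ} {r : ℕ}

theorem mwNext_mwStage (hm : IsMS m) (hrun : ∀ i < r, IsMaxEnd (DMW^[i] m) c) {i : ℕ}
    (hi : i < r) {Δ : Seg} (h : mwAt (DMW^[i] m) (k + 1) = some Δ) :
    mwNext (mwStage m i) Δ = mwAt (DMW^[i] m) k := by
  rw [← mwAt_mwStage hm hrun hi] at h ⊢
  exact mwNext_mwAt_succ (isMaxEnd_mwStage hm hrun hi) h

theorem MWkSet_eq (hm : IsMS m) (hrun : ∀ i < r, IsMaxEnd (DMW^[i] m) c) :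
    MWkSet m r k = ((colStarts m k 0 r).map (·, k) : List Seg) := by
  rw [MWkSet]
  simpa only [zero_add] using
    sum_filter_mwList_eq_colStarts (k := k) hm hrun (i := 0) (q := r) (by simp)

theorem MWkSet_le_endAt (hm : IsMS m) (hrun : ∀ i < r, IsMaxEnd (DMW^[i] m) c) :
    MWkSet m r k ≤ endAt m k := by
  rw [MWkSet, ← Multiset.filter_finset_sum]
  exact Multiset.filter_le_filter _ (sum_mwList_le hm hrun)

theorem greedyMatch_colStarts (hm : IsMS m) (hrun : ∀ i < r, IsMaxEnd (DMW^[i] m) c)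
    (hk : k < c) {q i : ℕ} (hiq : i + q ≤ r) :
    GreedyMatch ((endAt (mwStage m i) k).map Prod.fst) (colStarts m (k + 1) i q)
      (colStarts m k i q) := by
  induction q generalizing i with
  | zero => exact .nil _
  | succ q ih =>
  have hi : i < r := by omega
  unfold colStarts
  cases h1 : mwAt (DMW^[i] m) (k + 1) with
  | none => rw [mwAt_eq_none_of_succ (hrun i hi) hk h1]; exact .nil _
  | some Δ1 =>
  have hnext := mwNext_mwStage hm hrun hi h1
  obtain ⟨hΔ1, hΔ1end⟩ := mwAt_eq_some.mp (mwAt_mwStage hm hrun hi ▸ h1)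
  have hgen := hm.mono (mwStage_le_self m i) Δ1 (mem_of_mem_mwList hΔ1)
  have hprec : ∀ Δ ∈ endAt (mwStage m i) k, Δ.1 < Δ1.1 →
      Δ ∈ mwStage m i ∧ Δ.2 = Δ1.2 - 1 ∧ Prec Δ Δ1 := by
    intro Δ hΔ hlt
    obtain ⟨hΔm, hΔk⟩ := mem_endAt.mp hΔ
    exact ⟨hΔm, by omega, hlt, by omega, by omega⟩
  cases h0 : mwAt (DMW^[i] m) k with
  | none =>
    rw [h0, mwNext_eq_none] at hnext
    refine .fail _ fun x hx hlt => ?_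
    obtain ⟨Δ, hΔ, rfl⟩ := Multiset.mem_map.mp hx
    obtain ⟨hΔm, hend, hprec⟩ := hprec Δ hΔ hlt
    exact hnext Δ hΔm hend hprec
  | some Δ0 =>
    rw [h0, mwNext_eq_some] at hnext
    obtain ⟨hΔ0, hΔ0end, hprec0, hmax⟩ := hnext
    have hΔ0k : Δ0 ∈ endAt (mwStage m i) k := mem_endAt.mpr ⟨hΔ0, by omega⟩
    refine .step (Multiset.mem_map_of_mem _ hΔ0k) hprec0.1 (fun x hx hlt => ?_) ?_
    · obtain ⟨Δ, hΔ, rfl⟩ := Multiset.mem_map.mp hx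
      obtain ⟨hΔm, hend, hprec⟩ := hprec Δ hΔ hlt
      exact hmax Δ hΔm hend hprec
    · rw [← Multiset.map_erase_of_mem _ _ hΔ0k, ← endAt_mwStage_succ h0]
      exact ih (by omega)

theorem minLinked_MWkSet (hm : IsMS m) (hrun : ∀ i < r, IsMaxEnd (DMW^[i] m) c) (hk : k < c) :
    MinLinked m (k + 1) (MWkSet m r k) (MWkSet m r (k + 1)) := by
  have h₁ := MWkSet_le_endAt (k := k) hm hrun
  have h₂ := MWkSet_le_endAt (k := k + 1) hm hrun
  rw [MWkSet_eq hm hrun] at h₁ h₂ ⊢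
  rw [MWkSet_eq hm hrun]
  exact minLinked_of_greedyMatch (greedyMatch_colStarts hm hrun hk (i := 0) (by simp))
    (colStarts_pairwise hm hrun (by simp)) (colStarts_pairwise hm hrun (by simp))
    (colStarts_le hm) h₁ h₂

end MinimallyLinked

theorem stmt10_general (m : Multiset Seg) (hm : IsMS m)
    (c : ℤ) (hc : msetMax (m.map Prod.snd) = some c)
    (r : ℕ)
    (hstill : msetMax ((DMW^[r - 1] m).map Prod.snd) = some c)
    (a : ℤ) :
    -- (i) the MW participants of `m_i` are exactly those of `(𝒟^MW)^i(m)`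
    (∀ i < r, mwList (mwStage m i) = mwList (DMW^[i] m)) ∧
    -- in particular all participants form a submultisegment of `m`
    (∑ i ∈ Finset.range r, (mwList (DMW^[i] m) : Multiset Seg)) ≤ m ∧
    -- (ii)(a): if a run reaches down to end `k` it reaches end `k+1` ...
    (∀ i < r, ∀ k : ℤ, a ≤ k → k < c →
        (∃ Δ ∈ mwList (DMW^[i] m), Δ.2 = k) →
          ∃ Δ ∈ mwList (DMW^[i] m), Δ.2 = k + 1) ∧
    -- ... and the runs reaching end `k` form an initial segment (so
    -- `x_c ≥ x_{c-1} ≥ ⋯ ≥ x_a` and `MW_k(m) = {Δ_{k,1},…,Δ_{k,x_k}}`)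
    (∀ i j : ℕ, i ≤ j → j < r → ∀ k : ℤ, a ≤ k → k ≤ c →
        (∃ Δ ∈ mwList (DMW^[j] m), Δ.2 = k) →
          ∃ Δ ∈ mwList (DMW^[i] m), Δ.2 = k) ∧
    -- (ii)(b): for a fixed end `k`, the participants `Δ_{k,1}, Δ_{k,2}, …` are
    -- in increasing order
    (∀ i j : ℕ, i ≤ j → j < r → ∀ Δ Δ' : Seg,
        Δ ∈ mwList (DMW^[i] m) → Δ' ∈ mwList (DMW^[j] m) → Δ.2 = Δ'.2 →
          Δ'.1 ≤ Δ.1) ∧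
    -- (ii)(c): `MW_k(m)` and `MW_{k+1}(m)` are minimally linked in `m`
    (∀ k : ℤ, a ≤ k → k < c →
        MinLinked m (k + 1) (MWkSet m r k) (MWkSet m r (k + 1))) := by
  have hrun : ∀ i < r, IsMaxEnd (DMW^[i] m) c :=
    fun i hi => isMaxEnd_iterate_of_le hc hstill (by omega)
  refine ⟨fun i hi => mwList_mwStage hm hrun hi, sum_mwList_le hm hrun, ?_, ?_, ?_,
    fun k _ hk => minLinked_MWkSet hm hrun hk⟩
  · rintro i hi k - hk ⟨Δ, hΔ, rfl⟩
    obtain ⟨Δ', hΔ', hend, -⟩ := exists_mwNext_eq_of_mem_mwList (hrun i hi) hΔ hk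
    exact ⟨Δ', hΔ', hend⟩
  · rintro i j hij hj k - - ⟨Δ, hΔ, rfl⟩
    obtain ⟨Δ', hΔ', hend, -⟩ := exists_mwList_iterate_of_le hm hrun hij hj Δ hΔ
    exact ⟨Δ', hΔ', hend⟩
  · intro i j hij hj Δ Δ' hΔ hΔ' hend
    obtain ⟨Δ'', hΔ'', hend', hle⟩ := exists_mwList_iterate_of_le hm hrun hij hj Δ' hΔ'
    rwa [eq_of_mem_mwList_of_snd_eq hΔ'' hΔ (hend'.trans hend.symm)] at hle

/-- structure of the segments participating in the first `r` runs
of the MW algorithm. -/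
theorem stmt10 (m : Multiset Seg) (hm : IsMS m) (hne : m ≠ 0)
    (c : ℤ) (hc : msetMax (m.map Prod.snd) = some c)
    (r : ℕ) (hr : 1 ≤ r)
    (hstill : msetMax ((DMW^[r - 1] m).map Prod.snd) = some c)
    (a : ℤ) (ha : mwFirstSeg m = some (a, c)) :
    -- (i) the MW participants of `m_i` are exactly those of `(𝒟^MW)^i(m)`
    (∀ i < r, mwList (mwStage m i) = mwList (DMW^[i] m)) ∧
    -- in particular all participants form a submultisegment of `m`
    (∑ i ∈ Finset.range r, (mwList (DMW^[i] m) : Multiset Seg)) ≤ m ∧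
    -- (ii)(a): if a run reaches down to end `k` it reaches end `k+1` ...
    (∀ i < r, ∀ k : ℤ, a ≤ k → k < c →
        (∃ Δ ∈ mwList (DMW^[i] m), Δ.2 = k) →
          ∃ Δ ∈ mwList (DMW^[i] m), Δ.2 = k + 1) ∧
    -- ... and the runs reaching end `k` form an initial segment (so
    -- `x_c ≥ x_{c-1} ≥ ⋯ ≥ x_a` and `MW_k(m) = {Δ_{k,1},…,Δ_{k,x_k}}`)
    (∀ i j : ℕ, i ≤ j → j < r → ∀ k : ℤ, a ≤ k → k ≤ c →
        (∃ Δ ∈ mwList (DMW^[j] m), Δ.2 = k) →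
          ∃ Δ ∈ mwList (DMW^[i] m), Δ.2 = k) ∧
    -- (ii)(b): for a fixed end `k`, the participants `Δ_{k,1}, Δ_{k,2}, …` are
    -- in increasing order
    (∀ i j : ℕ, i ≤ j → j < r → ∀ Δ Δ' : Seg,
        Δ ∈ mwList (DMW^[i] m) → Δ' ∈ mwList (DMW^[j] m) → Δ.2 = Δ'.2 →
          Δ'.1 ≤ Δ.1) ∧
    -- (ii)(c): `MW_k(m)` and `MW_{k+1}(m)` are minimally linked in `m`
    (∀ k : ℤ, a ≤ k → k < c →
        MinLinked m (k + 1) (MWkSet m r k) (MWkSet m r (k + 1))) :=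
  stmt10_general m hm c hc r hstill a

end Multiseg
end
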